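/- arXiv:2001.09369 — 6 statements merged into one kernel-verified Lean document; each statement's English description precedes it below -/
import Mathlib

section
/- Let k ≥ 2 be a fixed integer and let p = p(n) be a sequence with n·p / log n → ∞ and n·p ≤ n^{1/(k−1)} for all large n. Let A = A(n) and B = B(n) be disjoint vertex sets with 1 ≤ |A| ≤ (n·p)^{k−2} and |B| = (1 + o(1))·n, and consider the random bipartite graph on A ∪ B in which each pair in A × B is an edge independently with probability p. Then for all sufficiently large n, with probability at least 1 − 1/n³ there is a d-matching from A to B that saturates A, where d = ⌊n·p/4⌋. -/
/-!
A `d`-matching saturating `A` exists as soon as every `S ⊆ A` has at least `d * #S` neighbours: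
this is Hall's theorem for the family in which every vertex of `A` is repeated `d` times.

Fix a nonempty `S` with `#S = s`. The columns `y ∈ B` of the random graph are independent, and `y`
is a neighbour of `S` with probability `1 - (1 - p) ^ s ≥ ps / (1 + ps)`. The exponential moment
bound with parameter `1 / 2` gives `P(#N(S) < d s) ≤ 2 ^ (d s) * ((1 + (1 - p) ^ s) / 2) ^ #B`.
Because `#A * np ≤ (np) ^ (k - 1) ≤ n`, we have `d s ≤ n / 4` besides `d s ≤ nps / 4`; with
`#B ≥ 9n / 10` the mean of `#N(S)` is then at least `1.8 d s`, and since `d s ≥ nps / 5` and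
`np ≥ 125 log n` the bound is at most `n ^ (-5 s)`. Summing over the nonempty `S ⊆ A` leaves at
most `2 #A n ^ (-5) ≤ n ^ (-3)`.
-/

open Filter

noncomputable section
open scoped Classical

/-- The probability that the random bipartite graph with parts `Fin a` and `Fin b`, in which
each pair is an edge independently with probability `p`, satisfies the property `P`. -/
def bipProb (a b : ℕ) (p : ℝ) (P : (Fin a → Fin b → Prop) → Prop) : ℝ :=
  ∑ f : Fin a → Fin b → Bool,
    if P (fun x y => f x y = true) then
      p ^ (Finset.univ.filter (fun q : Fin a × Fin b => f q.1 q.2 = true)).card *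
        (1 - p) ^ (Finset.univ.filter (fun q : Fin a × Fin b => f q.1 q.2 = false)).card
    else 0

/-- A `d`-matching from `A` to `B` saturating `A`: pairwise disjoint stars `K_{1,d}`, one
centered at each vertex of `A`, with all leaves in `B` and all edges in the graph. -/
def HasDMatching {a b : ℕ} (E : Fin a → Fin b → Prop) (d : ℕ) : Prop :=
  ∃ L : Fin a → Finset (Fin b),
    (∀ x, (L x).card = d ∧ ∀ y ∈ L x, E x y) ∧
    ∀ x x', x ≠ x' → Disjoint (L x) (L x')

open Finset Real

section Bernoulli

variable {ι : Type*} [Fintype ι] [DecidableEq ι] (p : ℝ)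

theorem sum_prod_cond_eq_one : ∑ c : ι → Bool, ∏ i, cond (c i) p (1 - p) = 1 := by
  rw [← Fintype.prod_sum fun _ v => cond v p (1 - p)]
  simp

theorem sum_prod_cond_of_forall_false (S : Finset ι) :
    ∑ c : ι → Bool, (if ∀ i ∈ S, c i = false then ∏ i, cond (c i) p (1 - p) else 0)
      = (1 - p) ^ #S := by
  have hfactor : ∀ c : ι → Bool,
      (if ∀ i ∈ S, c i = false then ∏ i, cond (c i) p (1 - p) else 0)
        = ∏ i, if i ∈ S → c i = false then cond (c i) p (1 - p) else 0 := fun c => by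
    rw [prod_ite_zero]; simp
  simp_rw [hfactor]
  rw [← Fintype.prod_sum fun i v => if i ∈ S → v = false then cond v p (1 - p) else 0,
    ← prod_const, ← Fintype.prod_ite_mem S]
  refine prod_congr rfl fun i _ => ?_
  by_cases hi : i ∈ S <;> simp [hi]

theorem sum_prod_cond_mul_ite_exists (S : Finset ι) (l : ℝ) :
    ∑ c : ι → Bool, (∏ i, cond (c i) p (1 - p)) * (if ∃ i ∈ S, c i = true then l else 1)
      = l + (1 - l) * (1 - p) ^ #S := by
  have hsplit : ∀ c : ι → Bool,
      (∏ i, cond (c i) p (1 - p)) * (if ∃ i ∈ S, c i = true then l else 1)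
        = l * ∏ i, cond (c i) p (1 - p)
          + (1 - l) * if ∀ i ∈ S, c i = false then ∏ i, cond (c i) p (1 - p) else 0 := fun c => by
    by_cases h : ∃ i ∈ S, c i = true
    · have h' : ¬ ∀ i ∈ S, c i = false := by simpa using h
      rw [if_pos h, if_neg h']; ring
    · have h' : ∀ i ∈ S, c i = false := by simpa using h
      rw [if_neg h, if_pos h']; ring
  simp_rw [hsplit, sum_add_distrib, ← mul_sum, sum_prod_cond_eq_one,
    sum_prod_cond_of_forall_false, mul_one]

end Bernoulli

theorem sum_prod_swap {α β γ : Type*} [Fintype α] [DecidableEq α] [Fintype β] [DecidableEq β]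
    [Fintype γ] (F : β → (α → γ) → ℝ) :
    ∑ f : α → β → γ, ∏ y, F y (fun x => f x y) = ∏ y, ∑ c : α → γ, F y c := by
  rw [Fintype.prod_sum]
  exact Fintype.sum_equiv (Equiv.piComm _) _ _ fun _ => rfl

def neighborhood {a b : ℕ} (S : Finset (Fin a)) (E : Fin a → Fin b → Prop) : Finset (Fin b) :=
  {y | ∃ x ∈ S, E x y}

section BipProb

variable {a b : ℕ} {p : ℝ}

theorem bipProb_weight_eq_prod (f : Fin a → Fin b → Bool) :
    p ^ #{q : Fin a × Fin b | f q.1 q.2 = true} * (1 - p) ^ #{q : Fin a × Fin b | f q.1 q.2 = false}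
      = ∏ y, ∏ x, cond (f x y) p (1 - p) := by
  rw [Finset.prod_comm, ← Fintype.prod_prod_type']
  simp [Bool.cond_eq_ite, prod_ite]

theorem bipProb_weight_nonneg (hp0 : 0 ≤ p) (hp1 : p ≤ 1) (f : Fin a → Fin b → Bool) :
    0 ≤ p ^ #{q : Fin a × Fin b | f q.1 q.2 = true}
      * (1 - p) ^ #{q : Fin a × Fin b | f q.1 q.2 = false} :=
  mul_nonneg (pow_nonneg hp0 _) (pow_nonneg (sub_nonneg.2 hp1) _)

theorem bipProb_mono (hp0 : 0 ≤ p) (hp1 : p ≤ 1) {P Q : (Fin a → Fin b → Prop) → Prop}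
    (h : ∀ E, P E → Q E) : bipProb a b p P ≤ bipProb a b p Q :=
  sum_le_sum fun f _ => by
    split_ifs with hP hQ
    exacts [le_rfl, absurd (h _ hP) hQ, bipProb_weight_nonneg hp0 hp1 f, le_rfl]

theorem bipProb_exists_le_sum (hp0 : 0 ≤ p) (hp1 : p ≤ 1) {κ : Type*} (I : Finset κ)
    (P : κ → (Fin a → Fin b → Prop) → Prop) :
    bipProb a b p (fun E => ∃ i ∈ I, P i E) ≤ ∑ i ∈ I, bipProb a b p (P i) := by
  unfold bipProb
  rw [sum_comm]
  refine sum_le_sum fun f _ => ?_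
  have hnn : ∀ i ∈ I, 0 ≤ if P i (fun x y => f x y = true) then
      p ^ #{q : Fin a × Fin b | f q.1 q.2 = true}
        * (1 - p) ^ #{q : Fin a × Fin b | f q.1 q.2 = false} else 0 := fun i _ => by
    split_ifs
    exacts [bipProb_weight_nonneg hp0 hp1 f, le_rfl]
  split_ifs with h
  · obtain ⟨i, hi, hPi⟩ := h
    exact (if_pos hPi).symm.le.trans (single_le_sum hnn hi)
  · exact sum_nonneg hnn

theorem bipProb_true : bipProb a b p (fun _ => True) = 1 := by
  simp only [bipProb, if_true, bipProb_weight_eq_prod]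
  rw [sum_prod_swap fun _ c => ∏ x, cond (c x) p (1 - p)]
  simp only [sum_prod_cond_eq_one, prod_const_one]

theorem bipProb_not (P : (Fin a → Fin b → Prop) → Prop) :
    bipProb a b p (fun E => ¬ P E) = 1 - bipProb a b p P := by
  rw [eq_sub_iff_add_eq, ← bipProb_true (a := a) (b := b) (p := p)]
  unfold bipProb
  rw [← sum_add_distrib]
  refine sum_congr rfl fun f _ => ?_
  split_ifs <;> simp_all

theorem bipProb_card_neighborhood_lt_le (hp0 : 0 ≤ p) (hp1 : p ≤ 1) (S : Finset (Fin a)) (t : ℕ)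
    {l : ℝ} (hl0 : 0 < l) (hl1 : l ≤ 1) :
    bipProb a b p (fun E => #(neighborhood S E) < t)
      ≤ (l ^ t)⁻¹ * (l + (1 - l) * (1 - p) ^ #S) ^ b := by
  have hmarkov : ∀ m < t, 1 ≤ (l ^ t)⁻¹ * l ^ m := fun m hm => by
    rw [le_inv_mul_iff₀ (pow_pos hl0 t), mul_one]
    exact pow_le_pow_of_le_one hl0.le hl1 hm.le
  have hpow : ∀ f : Fin a → Fin b → Bool, l ^ #(neighborhood S fun x y => f x y = true)
      = ∏ y, if ∃ x ∈ S, f x y = true then l else 1 := fun f => by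
    rw [← prod_const, ← Fintype.prod_ite_mem]
    simp [neighborhood]
  calc bipProb a b p (fun E => #(neighborhood S E) < t)
      ≤ ∑ f : Fin a → Fin b → Bool, (l ^ t)⁻¹ * ((∏ y, ∏ x, cond (f x y) p (1 - p))
          * l ^ #(neighborhood S fun x y => f x y = true)) := by
        refine sum_le_sum fun f _ => ?_
        have hw := bipProb_weight_nonneg hp0 hp1 f
        rw [bipProb_weight_eq_prod] at hw ⊢
        split_ifs with ht
        · nlinarith [hmarkov _ ht]
        · exact mul_nonneg (by positivity) (mul_nonneg hw (by positivity))
    _ = (l ^ t)⁻¹ * ∏ y, ∑ c : Fin a → Bool,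
          (∏ x, cond (c x) p (1 - p)) * (if ∃ x ∈ S, c x = true then l else 1) := by
        simp_rw [← mul_sum, hpow, ← prod_mul_distrib]
        rw [sum_prod_swap fun _ c =>
          (∏ x, cond (c x) p (1 - p)) * (if ∃ x ∈ S, c x = true then l else 1)]
    _ = (l ^ t)⁻¹ * (l + (1 - l) * (1 - p) ^ #S) ^ b := by
        rw [prod_congr rfl fun _ _ => by convert sum_prod_cond_mul_ite_exists p S l]
        simp

theorem bipProb_card_neighborhood_lt_le_exp (hp0 : 0 ≤ p) (hp1 : p ≤ 1) (S : Finset (Fin a))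
    (t : ℕ) :
    bipProb a b p (fun E => #(neighborhood S E) < t)
      ≤ exp (7 / 10 * t - (1 - (1 - p) ^ #S) * b / 2) := by
  have hexp : 2 ≤ exp (7 / 10) := by
    rw [← exp_log two_pos]
    exact exp_le_exp.2 (by linarith [log_two_lt_d9])
  have hr0 : 0 ≤ (1 - p) ^ #S := pow_nonneg (sub_nonneg.2 hp1) _
  have hr1 : (1 - p) ^ #S ≤ 1 := pow_le_one₀ (sub_nonneg.2 hp1) (by linarith)
  calc bipProb a b p (fun E => #(neighborhood S E) < t)
      ≤ ((1 / 2 : ℝ) ^ t)⁻¹ * (1 / 2 + (1 - 1 / 2) * (1 - p) ^ #S) ^ b :=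
        bipProb_card_neighborhood_lt_le hp0 hp1 S t (by norm_num) (by norm_num)
    _ ≤ exp (7 / 10) ^ t * exp (-((1 - (1 - p) ^ #S) / 2)) ^ b := by
        rw [one_div, inv_pow, inv_inv]
        gcongr
        linarith [one_sub_le_exp_neg ((1 - (1 - p) ^ #S) / 2)]
    _ = exp (7 / 10 * t - (1 - (1 - p) ^ #S) * b / 2) := by
        rw [← exp_nat_mul, ← exp_nat_mul, ← exp_add]; ring_nf

end BipProb

theorem hasDMatching_of_forall_le_card_neighborhood {a b d : ℕ} {E : Fin a → Fin b → Prop}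
    (h : ∀ S : Finset (Fin a), d * #S ≤ #(neighborhood S E)) : HasDMatching E d := by
  have hHall : ∀ s : Finset (Fin a × Fin d),
      #s ≤ #(s.biUnion fun z => neighborhood {z.1} E) := by
    intro s
    have hunion : s.biUnion (fun z => neighborhood {z.1} E)
        = neighborhood (s.image Prod.fst) E := by
      ext y; simp [neighborhood]
    calc #s ≤ #(s.image Prod.fst ×ˢ (univ : Finset (Fin d))) :=
          card_le_card fun z hz => mem_product.2 ⟨mem_image_of_mem _ hz, mem_univ _⟩
      _ = d * #(s.image Prod.fst) := by rw [card_product, card_univ, Fintype.card_fin, mul_comm]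
      _ ≤ _ := hunion ▸ h _
  obtain ⟨F, hF, hFE⟩ := (all_card_le_biUnion_card_iff_exists_injective _).1 hHall
  have hedge : ∀ z, E z.1 (F z) := fun z => by simpa [neighborhood] using hFE z
  refine ⟨fun x => univ.image fun i => F (x, i), fun x => ⟨?_, ?_⟩, fun x x' hxx' => ?_⟩
  · rw [card_image_of_injective _ fun i j hij => (Prod.ext_iff.1 (hF hij)).2, card_univ,
      Fintype.card_fin]
  · simp only [mem_image, mem_univ, true_and, forall_exists_index, forall_apply_eq_imp_iff]
    exact fun i => hedge (x, i)
  · simp only [disjoint_left, mem_image, mem_univ, true_and, not_exists, forall_exists_index,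
      forall_apply_eq_imp_iff]
    exact fun i j hij => hxx' (Prod.ext_iff.1 (hF hij)).1.symm

theorem one_sub_pow_le_inv_one_add_mul {p : ℝ} (hp0 : 0 ≤ p) (hp1 : p ≤ 1) (s : ℕ) :
    (1 - p) ^ s ≤ (1 + p * s)⁻¹ := by
  calc (1 - p) ^ s ≤ exp (-p) ^ s := pow_le_pow_left₀ (sub_nonneg.2 hp1) (one_sub_le_exp_neg p) s
    _ = (exp (p * s))⁻¹ := by rw [← exp_nat_mul, ← exp_neg]; ring_nf
    _ ≤ (1 + p * s)⁻¹ := inv_anti₀ (by positivity) (by linarith [add_one_le_exp (p * s)])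

theorem one_le_log_of_three_le {x : ℝ} (hx : 3 ≤ x) : 1 ≤ log x := by
  rw [le_log_iff_exp_le (by linarith)]
  linarith [exp_one_lt_d9]

theorem bipProb_card_neighborhood_lt_le_inv_pow {a b : ℕ} {n p : ℝ} (hn : 3 ≤ n) (hp0 : 0 ≤ p)
    (hp1 : p ≤ 1) (hnp : 125 * log n ≤ n * p) (hb : 9 * n ≤ 10 * b) (ha : a * (n * p) ≤ n)
    {S : Finset (Fin a)} (hS : S.Nonempty) :
    bipProb a b p (fun E => #(neighborhood S E) < ⌊n * p / 4⌋₊ * #S) ≤ ((n ^ 5)⁻¹) ^ #S := by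
  set d := ⌊n * p / 4⌋₊
  set s := #S
  set r := (1 - p) ^ s
  have hlog := one_le_log_of_three_le hn
  have hs : (1 : ℝ) ≤ s := by exact_mod_cast hS.card_pos
  have hsa : (s : ℝ) ≤ a := by exact_mod_cast card_le_univ S |>.trans_eq (Fintype.card_fin a)
  have hd_le : (d : ℝ) ≤ n * p / 4 := Nat.floor_le (by positivity)
  have hd_ge : n * p / 5 ≤ d := by linarith [Nat.sub_one_lt_floor (n * p / 4)]
  have ht_le_n : (d : ℝ) * s ≤ n / 4 := by
    calc (d : ℝ) * s ≤ n * p / 4 * a := by gcongr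
      _ ≤ n / 4 := by linarith
  have ht_le_nps : (d : ℝ) * s ≤ n * (p * s) / 4 := by
    calc (d : ℝ) * s ≤ n * p / 4 * s := by gcongr
      _ = n * (p * s) / 4 := by ring
  have hr : p * s ≤ (1 - r) * (1 + p * s) := by
    have := one_sub_pow_le_inv_one_add_mul hp0 hp1 s
    have h1 : r * (1 + p * s) ≤ 1 := (le_div_iff₀ (by positivity)).1 (by rwa [one_div])
    linarith
  have hmean : 9 / 10 * ((d : ℝ) * s) ≤ (1 - r) * b / 2 := by
    have h2t : 2 * ((d : ℝ) * s) ≤ n * (1 - r) := by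
      refine le_of_mul_le_mul_right ?_ (by positivity : (0 : ℝ) < 1 + p * s)
      have h1 : (d : ℝ) * s * (p * s) ≤ n / 4 * (p * s) := by gcongr
      have h2 : n * (p * s) ≤ n * ((1 - r) * (1 + p * s)) := by gcongr
      linarith
    nlinarith [pow_le_one₀ (sub_nonneg.2 hp1) (by linarith : 1 - p ≤ 1) (n := s)]
  calc bipProb a b p (fun E => #(neighborhood S E) < d * s)
      ≤ exp (7 / 10 * ((d * s : ℕ) : ℝ) - (1 - r) * b / 2) :=
        bipProb_card_neighborhood_lt_le_exp hp0 hp1 S (d * s)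
    _ ≤ exp (s * -log (n ^ 5)) := by
        gcongr
        rw [log_pow]
        push_cast
        nlinarith
    _ = ((n ^ 5)⁻¹) ^ s := by
        rw [exp_nat_mul, exp_neg, exp_log (by positivity)]

theorem sum_erase_empty_pow_card_le {α : Type*} [Fintype α] [DecidableEq α] {y : ℝ}
    (hy0 : 0 ≤ y) (hy1 : Fintype.card α * y ≤ 1) :
    ∑ S ∈ (univ : Finset (Finset α)).erase ∅, y ^ #S ≤ 2 * (Fintype.card α * y) := by
  have hsum : ∑ S : Finset α, y ^ #S = (y + 1) ^ Fintype.card α := by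
    simpa using Fintype.sum_pow_mul_eq_add_pow α y 1
  rw [sum_erase_eq_sub (mem_univ _), hsum, card_empty, pow_zero]
  have hexp : (y + 1) ^ Fintype.card α ≤ exp (Fintype.card α * y) := by
    rw [exp_nat_mul]; gcongr; exact add_one_le_exp y
  have hz : 0 ≤ Fintype.card α * y := mul_nonneg (Nat.cast_nonneg _) hy0
  have h2 := abs_exp_sub_one_le (x := Fintype.card α * y) (by rwa [abs_of_nonneg hz])
  rw [abs_of_nonneg (by linarith [add_one_le_exp (Fintype.card α * y)]), abs_of_nonneg hz] at h2
  linarith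

theorem one_sub_inv_pow_three_le_bipProb_hasDMatching {a b : ℕ} {n p : ℝ} (hn : 3 ≤ n)
    (hp0 : 0 ≤ p) (hp1 : p ≤ 1) (hnp : 125 * log n ≤ n * p) (hb : 9 * n ≤ 10 * b)
    (ha : a * (n * p) ≤ n) :
    1 - 1 / n ^ 3 ≤ bipProb a b p (fun E => HasDMatching E ⌊n * p / 4⌋₊) := by
  set d := ⌊n * p / 4⌋₊
  have han : (a : ℝ) ≤ n := by nlinarith [one_le_log_of_three_le hn]
  have hbad : bipProb a b p (fun E => ¬ HasDMatching E d)
      ≤ bipProb a b p (fun E => ∃ S ∈ (univ : Finset (Finset (Fin a))).erase ∅,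
          #(neighborhood S E) < d * #S) := by
    refine bipProb_mono hp0 hp1 fun E hE => ?_
    obtain ⟨S, hS⟩ := not_forall.1 (mt hasDMatching_of_forall_le_card_neighborhood hE)
    refine ⟨S, mem_erase.2 ⟨fun h => ?_, mem_univ _⟩, not_le.1 hS⟩
    simp [h] at hS
  have hunion : ∑ S ∈ (univ : Finset (Finset (Fin a))).erase ∅,
      bipProb a b p (fun E => #(neighborhood S E) < d * #S) ≤ 1 / n ^ 3 := by
    calc _ ≤ ∑ S ∈ (univ : Finset (Finset (Fin a))).erase ∅, ((n ^ 5)⁻¹) ^ #S :=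
          sum_le_sum fun S hS => bipProb_card_neighborhood_lt_le_inv_pow hn hp0 hp1 hnp hb ha
            (nonempty_iff_ne_empty.2 (ne_of_mem_erase hS))
      _ ≤ 2 * (Fintype.card (Fin a) * (n ^ 5)⁻¹) := by
          refine sum_erase_empty_pow_card_le (by positivity) ?_
          rw [Fintype.card_fin, ← div_eq_mul_inv, div_le_one (by positivity)]
          nlinarith [pow_le_pow_right₀ (by linarith : 1 ≤ n) (by norm_num : 1 ≤ 5)]
      _ ≤ 1 / n ^ 3 := by
          rw [Fintype.card_fin, ← div_eq_mul_inv, mul_div_assoc',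
            div_le_div_iff₀ (by positivity) (by positivity)]
          calc 2 * a * n ^ 3 ≤ 2 * n * n ^ 3 := by gcongr
            _ ≤ n * n * n ^ 3 := by gcongr; linarith
            _ = 1 * n ^ 5 := by ring
  have := (bipProb_exists_le_sum hp0 hp1 _ _).trans hunion
  rw [bipProb_not] at hbad
  linarith

theorem pow_pred_le_of_le_rpow_one_div {x y : ℝ} {k : ℕ} (hk : 2 ≤ k) (hx : 0 ≤ x) (hy : 0 ≤ y)
    (h : x ≤ y ^ ((1 : ℝ) / (k - 1))) : x ^ (k - 1) ≤ y := by
  have hk' : (k : ℝ) - 1 = ((k - 1 : ℕ) : ℝ) := by rw [Nat.cast_sub (by omega), Nat.cast_one]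
  have hpos : (0 : ℝ) < ((k - 1 : ℕ) : ℝ) := by exact_mod_cast (by omega : 0 < k - 1)
  rwa [one_div, hk', le_rpow_inv_iff_of_pos hx hy hpos, rpow_natCast] at h

/-- for fixed `k ≥ 2`, `np/log n → ∞`, `np ≤ n^{1/(k-1)}`,
`1 ≤ |A| ≤ (np)^{k-2}` and `|B| = (1+o(1))n`, for all large `n` the random bipartite graph
on `A ∪ B` with edge probability `p` contains, with probability at least `1 - 1/n³`,
an `⌊np/4⌋`-matching saturating `A`. -/
theorem bip_dMatching_sparse (k : ℕ) (hk : 2 ≤ k) (p : ℕ → ℝ)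
    (hlow : Tendsto (fun n : ℕ => n * p n / Real.log n) atTop atTop)
    (hhigh : ∀ᶠ n : ℕ in atTop, (n : ℝ) * p n ≤ (n : ℝ) ^ ((1 : ℝ) / (k - 1)))
    (a b : ℕ → ℕ)
    (ha : ∀ᶠ n : ℕ in atTop, 1 ≤ a n ∧ (a n : ℝ) ≤ ((n : ℝ) * p n) ^ (k - 2))
    (hb : Tendsto (fun n : ℕ => (b n : ℝ) / n) atTop (nhds 1)) :
    ∀ᶠ n : ℕ in atTop,
      1 - 1 / (n : ℝ) ^ 3 ≤
        bipProb (a n) (b n) (p n) (fun E => HasDMatching E ⌊(n : ℝ) * p n / 4⌋₊) := by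
  filter_upwards [hlow.eventually_ge_atTop 125, hhigh, ha,
    hb.eventually_const_lt (by norm_num : (9 / 10 : ℝ) < 1), eventually_ge_atTop 3]
    with n hlog hhigh ha hb hn
  have hn3 : (3 : ℝ) ≤ n := by exact_mod_cast hn
  have hlog1 := one_le_log_of_three_le hn3
  have hnp : 125 * log n ≤ n * p n := (le_div_iff₀ (by linarith)).1 hlog
  have hnp1 : 1 ≤ (n : ℝ) * p n := by linarith
  have hpow : ((n : ℝ) * p n) ^ (k - 1) ≤ n :=
    pow_pred_le_of_le_rpow_one_div hk (by linarith) (by positivity) hhigh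
  have hp0 : 0 ≤ p n := by nlinarith
  have hp1 : p n ≤ 1 := by nlinarith [le_self_pow₀ hnp1 (by omega : k - 1 ≠ 0)]
  have han : (a n : ℝ) * (n * p n) ≤ n := by
    calc (a n : ℝ) * (n * p n) ≤ (n * p n) ^ (k - 2) * (n * p n) := by gcongr; exact ha.2
      _ = (n * p n) ^ (k - 1) := by rw [← pow_succ]; congr 1; omega
      _ ≤ n := hpow
  have hb9 : 9 * (n : ℝ) ≤ 10 * b n := by
    have := (lt_div_iff₀ (by linarith)).1 hb
    linarith
  exact one_sub_inv_pow_three_le_bipProb_hasDMatching hn3 hp0 hp1 hnp hb9 han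
end
end

section
/- Let p = p(n) be a sequence with √n ≤ n·p ≤ √(n·log n) for all large n. Let A = A(n) and B = B(n) be disjoint vertex sets with 1 ≤ |A| ≤ n·p and |B| ≥ n/2, and consider the random bipartite graph on A ∪ B in which each pair in A × B is an edge independently with probability p. Then for all sufficiently large n, with probability at least 1 − 1/n³ there is a d-matching from A to B that saturates A, where d = ⌊1/(6p)⌋. -/
open Filter

noncomputable section
open scoped Classical

namespace BipAux
open Finset

variable {a b : ℕ}

/-- weight of a single row -/
def rowW (b : ℕ) (p : ℝ) (g : Fin b → Bool) : ℝ := ∏ y, if g y then p else 1 - p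

/-- weight of the whole graph -/
def W (a b : ℕ) (p : ℝ) (f : Fin a → Fin b → Bool) : ℝ := ∏ x, rowW b p (f x)

lemma sum_prod_fn {ι τ : Type*} [Fintype ι] [Fintype τ] [DecidableEq ι] (c : ι → τ → ℝ) :
    ∑ g : ι → τ, ∏ i, c i (g i) = ∏ i, ∑ t, c i t := by
  rw [Finset.prod_univ_sum (fun _ => (univ : Finset τ)) c, Fintype.piFinset_univ]

lemma rowW_nonneg {p : ℝ} (hp0 : 0 ≤ p) (hp1 : p ≤ 1) (g : Fin b → Bool) :
    0 ≤ rowW b p g := by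
  refine Finset.prod_nonneg fun y _ => ?_
  split <;> linarith

lemma sum_rowW {p : ℝ} : ∑ g : Fin b → Bool, rowW b p g = 1 := by
  unfold rowW
  rw [sum_prod_fn (fun (_ : Fin b) (t : Bool) => if t then p else 1 - p)]
  simp

lemma W_nonneg {p : ℝ} (hp0 : 0 ≤ p) (hp1 : p ≤ 1) (f : Fin a → Fin b → Bool) :
    0 ≤ W a b p f :=
  Finset.prod_nonneg fun x _ => rowW_nonneg hp0 hp1 _

lemma sum_W {p : ℝ} : ∑ f : Fin a → Fin b → Bool, W a b p f = 1 := by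
  unfold W
  rw [sum_prod_fn (fun (_ : Fin a) (g : Fin b → Bool) => rowW b p g)]
  simp [sum_rowW]

/-- bipProb in terms of W -/
lemma ite_prod_eq {p : ℝ} (f : Fin a → Fin b → Bool) :
    p ^ (Finset.univ.filter (fun q : Fin a × Fin b => f q.1 q.2 = true)).card *
      (1 - p) ^ (Finset.univ.filter (fun q : Fin a × Fin b => f q.1 q.2 = false)).card
    = W a b p f := by
  have h1 : ∀ q : Fin a × Fin b, (¬ f q.1 q.2 = true) ↔ f q.1 q.2 = false := by
    intro q; simp
  have h2 : W a b p f = ∏ q : Fin a × Fin b, if f q.1 q.2 then p else 1 - p := by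
    unfold W rowW
    rw [← Fintype.prod_prod_type' (fun x y => if f x y then p else 1 - p)]
  have h3 : (Finset.univ.filter fun q : Fin a × Fin b => ¬ f q.1 q.2 = true)
      = Finset.univ.filter fun q : Fin a × Fin b => f q.1 q.2 = false := by
    apply Finset.filter_congr; intro q _; simp
  rw [h2, Finset.prod_ite, Finset.prod_const, Finset.prod_const, h3]


/-- number of allowed neighbors in a row -/
def Dg (b : ℕ) (T : Finset (Fin b)) (g : Fin b → Bool) : ℕ :=
  (Finset.univ.filter (fun y => g y = true ∧ y ∉ T)).card

lemma half_pow_eq (T : Finset (Fin b)) (g : Fin b → Bool) :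
    ((1:ℝ)/2) ^ Dg b T g = ∏ y, if g y = true ∧ y ∉ T then (1/2 : ℝ) else 1 := by
  rw [Finset.prod_ite, Finset.prod_const, Finset.prod_const, one_pow, mul_one, Dg]

lemma mgf (p : ℝ) (T : Finset (Fin b)) :
    ∑ g : Fin b → Bool, rowW b p g * (1/2 : ℝ) ^ Dg b T g
      = (1 - p/2) ^ (b - T.card) := by
  have key : ∀ g : Fin b → Bool, rowW b p g * (1/2 : ℝ) ^ Dg b T g
      = ∏ y, (fun (y : Fin b) (t : Bool) =>
          (if t then p else 1 - p) * (if t = true ∧ y ∉ T then (1/2 : ℝ) else 1)) y (g y) := by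
    intro g
    rw [half_pow_eq, rowW, ← Finset.prod_mul_distrib]
  rw [Finset.sum_congr rfl (fun g _ => key g),
    sum_prod_fn (fun (y : Fin b) (t : Bool) =>
      (if t then p else 1 - p) * (if t = true ∧ y ∉ T then (1/2 : ℝ) else 1))]
  have h2 : ∀ y : Fin b,
      (∑ t : Bool, (if t then p else 1 - p) * (if t = true ∧ y ∉ T then (1/2 : ℝ) else 1))
      = if y ∈ T then 1 else 1 - p/2 := by
    intro y
    rw [Fintype.sum_bool]
    by_cases hy : y ∈ T <;> simp [hy] <;> ring
  rw [Finset.prod_congr rfl (fun y _ => h2 y), Finset.prod_ite, Finset.prod_const,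
    Finset.prod_const, one_pow, one_mul]
  congr 1
  have : Finset.univ.filter (fun y : Fin b => ¬ y ∈ T) = Tᶜ := by
    ext y; simp
  rw [this, Finset.card_compl, Fintype.card_fin]

lemma tail_le {p : ℝ} (hp0 : 0 ≤ p) (hp1 : p ≤ 1) (d : ℕ) (T : Finset (Fin b)) :
    ∑ g : Fin b → Bool, (if Dg b T g < d then rowW b p g else 0)
      ≤ 2 ^ d * (1 - p/2) ^ (b - T.card) := by
  have step : ∀ g : Fin b → Bool, (if Dg b T g < d then rowW b p g else 0)
      ≤ 2 ^ d * (rowW b p g * (1/2 : ℝ) ^ Dg b T g) := by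
    intro g
    have hw := rowW_nonneg hp0 hp1 g
    have hpow : (0:ℝ) ≤ (1/2 : ℝ) ^ Dg b T g := by positivity
    split_ifs with h
    · have h1 : ((1:ℝ)/2) ^ d ≤ (1/2 : ℝ) ^ Dg b T g :=
        pow_le_pow_of_le_one (by norm_num) (by norm_num) h.le
      calc rowW b p g = rowW b p g * (2 ^ d * (1/2 : ℝ) ^ d) := by
              rw [← mul_pow]; norm_num
        _ ≤ rowW b p g * (2 ^ d * (1/2 : ℝ) ^ Dg b T g) := by
              apply mul_le_mul_of_nonneg_left _ hw
              apply mul_le_mul_of_nonneg_left h1 (by positivity)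
        _ = 2 ^ d * (rowW b p g * (1/2 : ℝ) ^ Dg b T g) := by ring
    · positivity
  calc ∑ g : Fin b → Bool, (if Dg b T g < d then rowW b p g else 0)
      ≤ ∑ g : Fin b → Bool, 2 ^ d * (rowW b p g * (1/2 : ℝ) ^ Dg b T g) :=
        Finset.sum_le_sum fun g _ => step g
    _ = 2 ^ d * (1 - p/2) ^ (b - T.card) := by rw [← Finset.mul_sum, mgf]

lemma good_ge {p : ℝ} (hp0 : 0 ≤ p) (hp1 : p ≤ 1) (d : ℕ) (T : Finset (Fin b)) :
    1 - 2 ^ d * (1 - p/2) ^ (b - T.card)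
      ≤ ∑ g : Fin b → Bool, (if d ≤ Dg b T g then rowW b p g else 0) := by
  have key : ∀ g : Fin b → Bool, (if d ≤ Dg b T g then rowW b p g else 0)
      = rowW b p g - (if Dg b T g < d then rowW b p g else 0) := by
    intro g
    rcases lt_or_ge (Dg b T g) d with h | h
    · rw [if_pos h, if_neg (by omega)]; ring
    · rw [if_pos h, if_neg (by omega)]; ring
  rw [Finset.sum_congr rfl (fun g _ => key g), Finset.sum_sub_distrib, sum_rowW]
  linarith [tail_le hp0 hp1 d T]


/-- partial matching event: rows in `S` each get `d` leaves avoiding `T` -/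
def Mev (a b d : ℕ) (S : Finset (Fin a)) (T : Finset (Fin b))
    (f : Fin a → Fin b → Bool) : Prop :=
  ∃ L : Fin a → Finset (Fin b),
    (∀ x ∈ S, (L x).card = d ∧ ∀ y ∈ L x, f x y = true ∧ y ∉ T) ∧
    (∀ x ∈ S, ∀ x' ∈ S, x ≠ x' → Disjoint (L x) (L x'))

lemma Mev_congr {d : ℕ} {S : Finset (Fin a)} {T : Finset (Fin b)}
    {f f' : Fin a → Fin b → Bool} (h : ∀ x ∈ S, f x = f' x) :
    Mev a b d S T f → Mev a b d S T f' := by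
  rintro ⟨L, hL, hdisj⟩
  exact ⟨L, fun x hx => ⟨(hL x hx).1, fun y hy => by
    rw [← h x hx]; exact (hL x hx).2 y hy⟩, hdisj⟩

lemma Mev_update {d : ℕ} {S : Finset (Fin a)} {T : Finset (Fin b)} {x : Fin a}
    (hx : x ∉ S) (f : Fin a → Fin b → Bool) (g' : Fin b → Bool) :
    Mev a b d S T (Function.update f x g') ↔ Mev a b d S T f := by
  constructor
  · exact Mev_congr fun x' hx' =>
      (Function.update_of_ne (ne_of_mem_of_not_mem hx' hx) _ _)
  · exact Mev_congr fun x' hx' =>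
      (Function.update_of_ne (ne_of_mem_of_not_mem hx' hx) _ _).symm

lemma Mev_insert {d : ℕ} {S : Finset (Fin a)} {x : Fin a} (hx : x ∉ S)
    {T U : Finset (Fin b)} {f : Fin a → Fin b → Bool}
    (hfx : ∀ y ∈ U, f x y = true ∧ y ∉ T) (hUcard : U.card = d)
    (h : Mev a b d S (T ∪ U) f) : Mev a b d (insert x S) T f := by
  obtain ⟨L, hL, hdisj⟩ := h
  have hLU : ∀ x' ∈ S, Disjoint U (L x') := by
    intro x' hx'
    rw [Finset.disjoint_right]
    intro y hy
    have := ((hL x' hx').2 y hy).2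
    simp only [Finset.mem_union] at this
    tauto
  refine ⟨Function.update L x U, ?_, ?_⟩
  · intro x' hx'
    rcases Finset.mem_insert.1 hx' with rfl | hx'
    · rw [Function.update_self]
      exact ⟨hUcard, hfx⟩
    · rw [Function.update_of_ne (ne_of_mem_of_not_mem hx' hx)]
      refine ⟨(hL x' hx').1, fun y hy => ⟨((hL x' hx').2 y hy).1, ?_⟩⟩
      have := ((hL x' hx').2 y hy).2
      simp only [Finset.mem_union] at this
      tauto
  · intro x₁ hx₁ x₂ hx₂ hne
    rcases Finset.mem_insert.1 hx₁ with rfl | hx₁ <;>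
      rcases Finset.mem_insert.1 hx₂ with h₂ | hx₂
    · exact absurd h₂.symm hne
    · rw [Function.update_self, Function.update_of_ne (ne_of_mem_of_not_mem hx₂ hx)]
      exact hLU x₂ hx₂
    · rw [h₂, Function.update_self, Function.update_of_ne (ne_of_mem_of_not_mem hx₁ hx)]
      exact (hLU x₁ hx₁).symm
    · rw [Function.update_of_ne (ne_of_mem_of_not_mem hx₁ hx),
        Function.update_of_ne (ne_of_mem_of_not_mem hx₂ hx)]
      exact hdisj x₁ hx₁ x₂ hx₂ hne

lemma sum_expand (x : Fin a) (F : (Fin a → Fin b → Bool) → ℝ) :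
    ∑ f : Fin a → Fin b → Bool, F f
      = ∑ g : Fin b → Bool, ∑ f : Fin a → Fin b → Bool, if f x = g then F f else 0 := by
  have h : ∀ f : Fin a → Fin b → Bool,
      F f = ∑ g : Fin b → Bool, if f x = g then F f else 0 := by
    intro f
    rw [Finset.sum_ite_eq]
    simp
  rw [Finset.sum_congr rfl (fun f _ => h f), Finset.sum_comm]

lemma factorRow {p : ℝ} (x : Fin a) (G : (Fin a → Fin b → Bool) → ℝ)
    (hG : ∀ (f : Fin a → Fin b → Bool) (g' : Fin b → Bool), G (Function.update f x g') = G f)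
    (g : Fin b → Bool) :
    ∑ f : Fin a → Fin b → Bool, (if f x = g then G f * W a b p f else 0)
      = rowW b p g * ∑ f : Fin a → Fin b → Bool, G f * W a b p f := by
  set R : (Fin a → Fin b → Bool) → ℝ :=
    fun f => ∏ x' ∈ Finset.univ.erase x, rowW b p (f x') with hRdef
  have hW : ∀ f : Fin a → Fin b → Bool, W a b p f = rowW b p (f x) * R f := fun f =>
    (Finset.mul_prod_erase Finset.univ (fun x' => rowW b p (f x')) (Finset.mem_univ x)).symm
  have hR : ∀ (f : Fin a → Fin b → Bool) (g' : Fin b → Bool),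
      R (Function.update f x g') = R f := by
    intro f g'
    apply Finset.prod_congr rfl
    intro x' hx'
    rw [Function.update_of_ne (Finset.ne_of_mem_erase hx')]
  set Y : (Fin b → Bool) → ℝ :=
    fun g₀ => ∑ f : Fin a → Fin b → Bool, if f x = g₀ then G f * R f else 0 with hYdef
  have hterm : ∀ (g₀ : Fin b → Bool) (f : Fin a → Fin b → Bool),
      (if f x = g₀ then G f * W a b p f else 0)
        = rowW b p g₀ * (if f x = g₀ then G f * R f else 0) := by
    intro g₀ f
    split_ifs with h
    · rw [hW, h]; ring
    · rw [mul_zero]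
  have hYconst : ∀ g₁ g₂ : Fin b → Bool, Y g₁ = Y g₂ := by
    intro g₁ g₂
    rw [hYdef]
    simp only
    rw [← Finset.sum_filter, ← Finset.sum_filter]
    refine Finset.sum_nbij' (fun f => Function.update f x g₂)
      (fun f => Function.update f x g₁) ?_ ?_ ?_ ?_ ?_
    · intro f hf
      simp only [Finset.mem_filter, Finset.mem_univ, true_and]
      exact Function.update_self x g₂ f
    · intro f hf
      simp only [Finset.mem_filter, Finset.mem_univ, true_and]
      exact Function.update_self x g₁ f
    · intro f hf
      simp only [Finset.mem_filter, Finset.mem_univ, true_and] at hf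
      show Function.update (Function.update f x g₂) x g₁ = f
      rw [Function.update_idem, ← hf, Function.update_eq_self]
    · intro f hf
      simp only [Finset.mem_filter, Finset.mem_univ, true_and] at hf
      show Function.update (Function.update f x g₁) x g₂ = f
      rw [Function.update_idem, ← hf, Function.update_eq_self]
    · intro f hf
      show G f * R f = G (Function.update f x g₂) * R (Function.update f x g₂)
      rw [hG, hR]
  have lhs_eq : ∑ f : Fin a → Fin b → Bool, (if f x = g then G f * W a b p f else 0)
      = rowW b p g * Y g := by
    rw [Finset.sum_congr rfl (fun f _ => hterm g f), ← Finset.mul_sum]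
  have rhs_eq : ∑ f : Fin a → Fin b → Bool, G f * W a b p f = Y g := by
    rw [sum_expand x (fun f => G f * W a b p f)]
    have : ∀ g₀ : Fin b → Bool,
        (∑ f : Fin a → Fin b → Bool, if f x = g₀ then G f * W a b p f else 0)
          = rowW b p g₀ * Y g := by
      intro g₀
      rw [Finset.sum_congr rfl (fun f _ => hterm g₀ f), ← Finset.mul_sum]
      show rowW b p g₀ * Y g₀ = rowW b p g₀ * Y g
      rw [hYconst g₀ g]
    rw [Finset.sum_congr rfl (fun g₀ _ => this g₀), ← Finset.sum_mul, sum_rowW, one_mul]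
  rw [lhs_eq, rhs_eq]


lemma main {p ε : ℝ} (hp0 : 0 ≤ p) (hp1 : p ≤ 1) (hε : 0 ≤ ε) (d : ℕ)
    (htail : ∀ T : Finset (Fin b), T.card ≤ a * d →
      1 - ε ≤ ∑ g : Fin b → Bool, (if d ≤ Dg b T g then rowW b p g else 0)) :
    ∀ S : Finset (Fin a), ∀ T : Finset (Fin b), T.card + S.card * d ≤ a * d →
      1 - S.card * ε
        ≤ ∑ f : Fin a → Fin b → Bool, if Mev a b d S T f then W a b p f else 0 := by
  intro S
  induction S using Finset.induction_on with
  | empty =>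
    intro T _
    have hall : ∀ f : Fin a → Fin b → Bool, Mev a b d ∅ T f := fun f =>
      ⟨fun _ => ∅, fun x hx => absurd hx (Finset.notMem_empty x),
        fun x hx => absurd hx (Finset.notMem_empty x)⟩
    rw [Finset.sum_congr rfl (fun f _ => if_pos (hall f)), sum_W]
    simp
  | @insert x S hx IH =>
    intro T hT
    have hsum_nonneg : (0:ℝ) ≤ ∑ f : Fin a → Fin b → Bool,
        if Mev a b d (insert x S) T f then W a b p f else 0 := by
      apply Finset.sum_nonneg
      intro f _
      split_ifs
      · exact W_nonneg hp0 hp1 f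
      · exact le_refl 0
    rw [Finset.card_insert_of_notMem hx] at hT ⊢
    by_cases hC : 0 ≤ 1 - (S.card : ℝ) * ε
    swap
    · push_cast
      push_neg at hC
      nlinarith
    · -- positive case
      set C : ℝ := 1 - (S.card : ℝ) * ε with hCdef
      have expand := sum_expand x
        (fun f => if Mev a b d (insert x S) T f then W a b p f else 0)
      rw [expand]
      have key : ∀ g : Fin b → Bool,
          (if d ≤ Dg b T g then rowW b p g * C else 0)
            ≤ ∑ f : Fin a → Fin b → Bool,
                if f x = g then (if Mev a b d (insert x S) T f then W a b p f else 0)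
                else 0 := by
        intro g
        have hinner_nonneg : (0:ℝ) ≤ ∑ f : Fin a → Fin b → Bool,
            if f x = g then (if Mev a b d (insert x S) T f then W a b p f else 0) else 0 := by
          apply Finset.sum_nonneg
          intro f _
          split_ifs
          · exact W_nonneg hp0 hp1 f
          · exact le_refl 0
          · exact le_refl 0
        split_ifs with hg
        swap
        · exact hinner_nonneg
        · have hg' : d ≤ (Finset.univ.filter (fun y : Fin b => g y = true ∧ y ∉ T)).card := hg
          obtain ⟨U, hUsub, hUcard⟩ := Finset.exists_subset_card_eq hg'
          have hUmem : ∀ y ∈ U, g y = true ∧ y ∉ T := by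
            intro y hy
            have := hUsub hy
            simp only [Finset.mem_filter, Finset.mem_univ, true_and] at this
            exact this
          set G : (Fin a → Fin b → Bool) → ℝ :=
            fun f => if Mev a b d S (T ∪ U) f then (1:ℝ) else 0 with hGdef
          have hG : ∀ (f : Fin a → Fin b → Bool) (g' : Fin b → Bool),
              G (Function.update f x g') = G f := by
            intro f g'
            show (if Mev a b d S (T ∪ U) (Function.update f x g') then (1:ℝ) else 0)
              = if Mev a b d S (T ∪ U) f then (1:ℝ) else 0
            exact if_congr (Mev_update hx f g') rfl rfl
          have hGW : ∀ f : Fin a → Fin b → Bool,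
              G f * W a b p f = if Mev a b d S (T ∪ U) f then W a b p f else 0 := by
            intro f
            show (if Mev a b d S (T ∪ U) f then (1:ℝ) else 0) * W a b p f = _
            split_ifs <;> ring
          have hTU : (T ∪ U).card + S.card * d ≤ a * d := by
            have h1 : (T ∪ U).card ≤ T.card + U.card := Finset.card_union_le T U
            have h2 : (S.card + 1) * d = S.card * d + d := by ring
            omega
          have hIH := IH (T ∪ U) hTU
          have hIH' : C ≤ ∑ f : Fin a → Fin b → Bool, G f * W a b p f := by
            rw [Finset.sum_congr rfl (fun f _ => hGW f)]
            exact hIH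
          calc rowW b p g * C
              ≤ rowW b p g * ∑ f : Fin a → Fin b → Bool, G f * W a b p f :=
                mul_le_mul_of_nonneg_left hIH' (rowW_nonneg hp0 hp1 g)
            _ = ∑ f : Fin a → Fin b → Bool, (if f x = g then G f * W a b p f else 0) :=
                (factorRow x G hG g).symm
            _ ≤ ∑ f : Fin a → Fin b → Bool,
                  if f x = g then (if Mev a b d (insert x S) T f then W a b p f else 0)
                  else 0 := by
                apply Finset.sum_le_sum
                intro f _
                by_cases hfx : f x = g
                · rw [if_pos hfx, if_pos hfx, hGW]
                  split_ifs with h1 h2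
                  · exact le_refl _
                  · exact absurd (Mev_insert hx (fun y hy => by
                      rw [hfx]; exact hUmem y hy) hUcard h1) h2
                  · exact W_nonneg hp0 hp1 f
                  · exact le_refl 0
                · rw [if_neg hfx, if_neg hfx]
          done
      have step1 : ∑ g : Fin b → Bool, (if d ≤ Dg b T g then rowW b p g * C else 0)
          ≤ ∑ g : Fin b → Bool, ∑ f : Fin a → Fin b → Bool,
              if f x = g then (if Mev a b d (insert x S) T f then W a b p f else 0)
              else 0 :=
        Finset.sum_le_sum fun g _ => key g
      have e1 : ∑ g : Fin b → Bool, (if d ≤ Dg b T g then rowW b p g * C else 0)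
          = (∑ g : Fin b → Bool, (if d ≤ Dg b T g then rowW b p g else 0)) * C := by
        rw [Finset.sum_mul]
        apply Finset.sum_congr rfl
        intro g _
        split_ifs <;> ring
      have hGM := htail T (by omega)
      have hGM1 : (∑ g : Fin b → Bool, (if d ≤ Dg b T g then rowW b p g else 0)) ≤ 1 := by
        calc (∑ g : Fin b → Bool, (if d ≤ Dg b T g then rowW b p g else 0))
            ≤ ∑ g : Fin b → Bool, rowW b p g := by
              apply Finset.sum_le_sum
              intro g _
              split_ifs
              · exact le_refl _
              · exact rowW_nonneg hp0 hp1 g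
          _ = 1 := sum_rowW
      have final : 1 - ((S.card : ℝ) + 1) * ε
          ≤ ∑ g : Fin b → Bool, (if d ≤ Dg b T g then rowW b p g * C else 0) := by
        rw [e1]
        have hc0 : (0:ℝ) ≤ (S.card : ℝ) := Nat.cast_nonneg _
        have hC1 : C ≤ 1 := by
          rw [hCdef]
          nlinarith
        have t1 : (1 - ε) * C
            ≤ (∑ g : Fin b → Bool, (if d ≤ Dg b T g then rowW b p g else 0)) * C :=
          mul_le_mul_of_nonneg_right hGM hC
        have t2 : ε * C ≤ ε * 1 := mul_le_mul_of_nonneg_left hC1 hε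
        linarith
      push_cast
      linarith [le_trans final step1]

end BipAux

/-- for `√n ≤ np ≤ √(n log n)`, `1 ≤ |A| ≤ np` and `|B| ≥ n/2`, for all large
`n` the random bipartite graph on `A ∪ B` with edge probability `p` contains, with
probability at least `1 - 1/n³`, a `⌊1/(6p)⌋`-matching saturating `A`. -/
theorem bip_dMatching_middle (p : ℕ → ℝ)
    (hrange : ∀ᶠ n : ℕ in atTop,
      Real.sqrt n ≤ (n : ℝ) * p n ∧ (n : ℝ) * p n ≤ Real.sqrt ((n : ℝ) * Real.log n))
    (a b : ℕ → ℕ)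
    (ha : ∀ᶠ n : ℕ in atTop, 1 ≤ a n ∧ (a n : ℝ) ≤ (n : ℝ) * p n)
    (hb : ∀ᶠ n : ℕ in atTop, (n : ℝ) / 2 ≤ (b n : ℝ)) :
    ∀ᶠ n : ℕ in atTop,
      1 - 1 / (n : ℝ) ^ 3 ≤
        bipProb (a n) (b n) (p n) (fun E => HasDMatching E ⌊1 / (6 * p n)⌋₊) := by
  filter_upwards [hrange, ha, hb, eventually_ge_atTop 10485760000] with n h1 h2 h3 hn
  set P := p n with hPdef
  set A := a n with hAdef
  set B := b n with hBdef
  set d : ℕ := ⌊1 / (6 * P)⌋₊ with hddef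
  have hnR : (10485760000:ℝ) ≤ (n:ℝ) := by exact_mod_cast hn
  have hnpos : (0:ℝ) < n := by linarith
  have hsqpos : (0:ℝ) < Real.sqrt n := Real.sqrt_pos.2 hnpos
  have hPpos : 0 < P := by
    by_contra hP
    push_neg at hP
    have : (n:ℝ) * P ≤ 0 := mul_nonpos_of_nonneg_of_nonpos hnpos.le hP
    linarith [h1.1, hsqpos]
  have hp0 : 0 ≤ P := hPpos.le
  have hlogn : Real.log n ≤ (n:ℝ) := by
    linarith [Real.log_le_sub_one_of_pos hnpos]
  have hloggt : 0 < Real.log n := Real.log_pos (by linarith)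
  have hP1 : P ≤ 1 := by
    have hs : Real.sqrt ((n:ℝ) * Real.log n) ≤ (n:ℝ) := by
      rw [show (n:ℝ) = Real.sqrt ((n:ℝ) * (n:ℝ)) from (Real.sqrt_mul_self hnpos.le).symm]
      apply Real.sqrt_le_sqrt
      · rw [Real.sqrt_mul_self hnpos.le]
        exact mul_le_mul_of_nonneg_left hlogn hnpos.le
    have hnP : (n:ℝ) * P ≤ (n:ℝ) * 1 := by
      rw [mul_one]; exact le_trans h1.2 hs
    exact le_of_mul_le_mul_left hnP hnpos
  have hsqmul : Real.sqrt n * Real.sqrt n = (n:ℝ) := Real.mul_self_sqrt hnpos.le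
  have hPlb : 1 / Real.sqrt n ≤ P := by
    rw [div_le_iff₀ hsqpos]
    have h4 : Real.sqrt n * 1 ≤ Real.sqrt n * (Real.sqrt n * P) := by
      rw [mul_one, ← mul_assoc, hsqmul]
      exact h1.1
    have h5 : 1 ≤ Real.sqrt n * P := le_of_mul_le_mul_left h4 hsqpos
    linarith [mul_comm (Real.sqrt n) P]
  have hPinv : 1 / P ≤ Real.sqrt n := by
    rw [div_le_iff₀ hPpos]
    rw [div_le_iff₀ hsqpos] at hPlb
    linarith [mul_comm P (Real.sqrt n)]
  -- d bounds
  have hd6 : (d:ℝ) ≤ 1 / (6 * P) := Nat.floor_le (by positivity)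
  have hdsq : (d:ℝ) ≤ Real.sqrt n / 6 := by
    calc (d:ℝ) ≤ 1 / (6 * P) := hd6
      _ = (1/P) / 6 := by ring
      _ ≤ Real.sqrt n / 6 := by linarith
  -- a·d bound
  have hadR : (A:ℝ) * (d:ℝ) ≤ (n:ℝ) / 6 := by
    calc (A:ℝ) * (d:ℝ) ≤ ((n:ℝ) * P) * (1 / (6 * P)) :=
        mul_le_mul h2.2 hd6 (Nat.cast_nonneg d) (by positivity)
      _ = (n:ℝ) / 6 := by field_simp
  have hadB : A * d ≤ B := by
    have : ((A * d : ℕ) : ℝ) ≤ (B:ℝ) := by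
      push_cast
      linarith [h3]
    exact_mod_cast this
  set m : ℕ := B - A * d with hmdef
  have hmR : (n:ℝ) / 3 ≤ (m:ℝ) := by
    have : (m:ℝ) = (B:ℝ) - (A:ℝ) * (d:ℝ) := by
      rw [hmdef]
      push_cast [hadB]
      ring
    rw [this]
    linarith [h3]
  -- the error probability for one row
  set ε : ℝ := 2 ^ d * (1 - P/2) ^ m with hεdef
  have hbase0 : (0:ℝ) ≤ 1 - P/2 := by linarith
  have hbase1 : 1 - P/2 ≤ 1 := by linarith
  have hε0 : 0 ≤ ε := by positivity
  -- row tail bound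
  have htail : ∀ T : Finset (Fin B), T.card ≤ A * d →
      1 - ε ≤ ∑ g : Fin B → Bool, (if d ≤ BipAux.Dg B T g then BipAux.rowW B P g else 0) := by
    intro T hTc
    have h5 := BipAux.good_ge hp0 hP1 d T
    have h6 : (1 - P/2) ^ (B - T.card) ≤ (1 - P/2) ^ m :=
      pow_le_pow_of_le_one hbase0 hbase1 (Nat.sub_le_sub_left hTc B)
    have h7 : (2:ℝ) ^ d * (1 - P/2) ^ (B - T.card) ≤ ε := by
      rw [hεdef]
      exact mul_le_mul_of_nonneg_left h6 (by positivity)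
    linarith
  -- apply the main lemma
  have hcond : (∅ : Finset (Fin B)).card + (Finset.univ : Finset (Fin A)).card * d ≤ A * d := by
    simp [Finset.card_univ]
  have hmain := BipAux.main hp0 hP1 hε0 d htail Finset.univ ∅ hcond
  rw [Finset.card_univ, Fintype.card_fin] at hmain
  -- from Mev to HasDMatching
  have himp : ∀ f : Fin A → Fin B → Bool, BipAux.Mev A B d Finset.univ ∅ f →
      HasDMatching (fun x y => f x y = true) d := by
    rintro f ⟨L, hL, hdisj⟩
    exact ⟨L, fun x => ⟨(hL x (Finset.mem_univ x)).1,
      fun y hy => ((hL x (Finset.mem_univ x)).2 y hy).1⟩,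
      fun x x' hne => hdisj x (Finset.mem_univ x) x' (Finset.mem_univ x') hne⟩
  have hbip : (∑ f : Fin A → Fin B → Bool,
        if BipAux.Mev A B d Finset.univ ∅ f then BipAux.W A B P f else 0)
      ≤ bipProb A B P (fun E => HasDMatching E d) := by
    unfold bipProb
    apply Finset.sum_le_sum
    intro f _
    rw [BipAux.ite_prod_eq (p := P) f]
    split_ifs with hMev hH
    · exact le_refl _
    · exact absurd (himp f hMev) hH
    · exact BipAux.W_nonneg hp0 hP1 f
    · exact le_refl 0
  -- numeric bound : A * ε ≤ 1 / n ^ 3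
  set s : ℝ := Real.sqrt (n:ℝ) with hsdef
  have hAn : (A:ℝ) ≤ (n:ℝ) := by
    calc (A:ℝ) ≤ (n:ℝ) * P := h2.2
      _ ≤ (n:ℝ) * 1 := by nlinarith
      _ = (n:ℝ) := mul_one _
  have h2d : (2:ℝ) ^ d ≤ Real.exp (s * Real.log 2 / 6) := by
    have he : (2:ℝ) ^ d = Real.exp ((d:ℝ) * Real.log 2) := by
      rw [Real.exp_nat_mul, Real.exp_log (by norm_num)]
    rw [he]
    apply Real.exp_le_exp.mpr
    have hlog2 : (0:ℝ) ≤ Real.log 2 := Real.log_nonneg (by norm_num)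
    calc (d:ℝ) * Real.log 2 ≤ (s/6) * Real.log 2 :=
        mul_le_mul_of_nonneg_right hdsq hlog2
      _ = s * Real.log 2 / 6 := by ring
  have hm2 : (1 - P/2) ^ m ≤ Real.exp (-(s/6)) := by
    calc (1 - P/2) ^ m ≤ (Real.exp (-(P/2))) ^ m :=
        pow_le_pow_left₀ hbase0 (Real.one_sub_le_exp_neg (P/2)) m
      _ = Real.exp (-(P/2) * m) := by rw [← Real.exp_nat_mul]; ring_nf
      _ ≤ Real.exp (-(s/6)) := by
          apply Real.exp_le_exp.mpr
          have hPm : s/3 ≤ P * m := by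
            have he9 : (1/s) * ((n:ℝ)/3) = s/3 := by
              rw [← hsqmul]
              field_simp
            calc s/3 = (1/s) * ((n:ℝ)/3) := he9.symm
              _ ≤ P * m := mul_le_mul hPlb hmR (by positivity) hp0
          linarith
  have hAε : (A:ℝ) * ε ≤ 1 / (n:ℝ) ^ 3 := by
    have hchain : (A:ℝ) * ε ≤ (n:ℝ) * Real.exp (s * Real.log 2 / 6 + -(s/6)) := by
      rw [Real.exp_add, hεdef]
      apply mul_le_mul hAn _ (by positivity) hnpos.le
      apply mul_le_mul h2d hm2 (by positivity) (Real.exp_pos _).le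
    set r := Real.sqrt s with hrdef
    have hs0 : 0 ≤ s := Real.sqrt_nonneg _
    have hr0 : 0 ≤ r := Real.sqrt_nonneg _
    have hr2 : r * r = s := Real.mul_self_sqrt hs0
    have hr320 : (320:ℝ) ≤ r := by
      have h320 : Real.sqrt (Real.sqrt ((320:ℝ)^4)) = 320 := by
        rw [show ((320:ℝ)^4) = ((320:ℝ)^2)^2 by ring, Real.sqrt_sq (by positivity),
          show ((320:ℝ)^2) = 320*320 by ring, Real.sqrt_mul_self (by norm_num)]
      calc (320:ℝ) = Real.sqrt (Real.sqrt ((320:ℝ)^4)) := h320.symm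
        _ ≤ r := by
            rw [hrdef, hsdef]
            apply Real.sqrt_le_sqrt
            apply Real.sqrt_le_sqrt
            norm_num
            linarith
    have hlogr : Real.log (n:ℝ) ≤ 4 * r := by
      have hrpos : 0 < r := by linarith
      have hn4 : (n:ℝ) = r^4 := by
        rw [← hsqmul, ← hr2]
        ring
      calc Real.log (n:ℝ) = Real.log (r^4) := by rw [← hn4]
        _ = 4 * Real.log r := by
            rw [Real.log_pow]
            push_cast
            ring
        _ ≤ 4 * r := by
            have := Real.log_le_sub_one_of_pos hrpos
            linarith
    have hlog_s : 4 * Real.log (n:ℝ) ≤ s / 20 := by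
      have h16 : (320:ℝ) * r ≤ r * r := mul_le_mul_of_nonneg_right hr320 hr0
      linarith
    have hlog2lt : Real.log 2 < 0.6931471808 := Real.log_two_lt_d9
    have hexp_ge : 4 * Real.log (n:ℝ) ≤ s/6 - s * Real.log 2 / 6 := by
      have hl27 : Real.log 2 ≤ 0.7 := by linarith
      have h8 : s * Real.log 2 ≤ s * 0.7 := mul_le_mul_of_nonneg_left hl27 hs0
      linarith
    have hkey : (n:ℝ)^4 ≤ Real.exp (s/6 - s * Real.log 2 / 6) := by
      have hh : (n:ℝ)^4 = Real.exp (4 * Real.log (n:ℝ)) := by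
        rw [show (4:ℝ) * Real.log (n:ℝ) = Real.log ((n:ℝ)^4) by
          rw [Real.log_pow]; push_cast; ring]
        rw [Real.exp_log (by positivity)]
      rw [hh]
      exact Real.exp_le_exp.mpr hexp_ge
    rw [le_div_iff₀ (by positivity)]
    calc (A:ℝ) * ε * (n:ℝ)^3
        ≤ ((n:ℝ) * Real.exp (s * Real.log 2 / 6 + -(s/6))) * (n:ℝ)^3 := by
          apply mul_le_mul_of_nonneg_right hchain (by positivity)
      _ = (n:ℝ)^4 * Real.exp (s * Real.log 2 / 6 + -(s/6)) := by ring
      _ ≤ Real.exp (s/6 - s * Real.log 2 / 6) * Real.exp (s * Real.log 2 / 6 + -(s/6)) := by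
          apply mul_le_mul_of_nonneg_right hkey (Real.exp_pos _).le
      _ = 1 := by
          rw [← Real.exp_add,
            show s/6 - s * Real.log 2 / 6 + (s * Real.log 2 / 6 + -(s/6)) = 0 by ring,
            Real.exp_zero]
  -- conclude
  calc 1 - 1 / (n:ℝ)^3 ≤ 1 - (A:ℝ) * ε := by linarith
    _ ≤ ∑ f : Fin A → Fin B → Bool,
          if BipAux.Mev A B d Finset.univ ∅ f then BipAux.W A B P f else 0 := hmain
    _ ≤ bipProb A B P (fun E => HasDMatching E d) := hbip
end
end

section
/- Let r ≥ 2 be a fixed integer. Let (G_n) be a sequence of graphs where G_n has n vertices and every vertex of G_n has degree (1 + o(1))·d_n. Then for every ε > 0 and all sufficiently large n, κ_{r,2}(G_n) ≤ (1 − 1/r + ε)·d_n²/n. -/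
/-!
Fix a coloring witnessing `t` alternating paths of length two between every pair. Such a path
`u - w - v` is determined by its midpoint `w`, so there are at least `t n (n - 1)` triples
`(u, w, v)` with `u ≠ v` and `uw`, `wv` of different colors. Grouped by the midpoint, they are
the pairs of neighbours of `w` whose edges to `w` have different colors, and Cauchy–Schwarz on
the color classes bounds their number by `(1 - 1/r) deg(w)²`. Hence
`t n (n - 1) ≤ (1 - 1/r) ∑ deg(w)² ≤ (1 - 1/r) n ((1 + o(1)) d)²`.
-/

open Filter

noncomputable section
open scoped Classical

/-- `HasAltConn G r ℓ t`: there is an `r`-edge-coloring of `G` (a color in `Fin r` for every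
potential edge; only values on actual edges matter) such that every pair of distinct vertices
is joined by `t` pairwise internally disjoint alternating paths of length `ℓ`. -/
def HasAltConn {V : Type*} (G : SimpleGraph V) (r ℓ t : ℕ) : Prop :=
  ∃ c : Sym2 V → Fin r, ∀ u v : V, u ≠ v →
    ∃ f : Fin t → G.Walk u v,
      Function.Injective f ∧
      (∀ i, (f i).IsPath ∧ (f i).length = ℓ ∧
        List.Chain' (fun e e' => c e ≠ c e') (f i).edges) ∧
      (∀ i j, i ≠ j → ∀ x, x ∈ (f i).support.tail.dropLast → x ∉ (f j).support.tail.dropLast)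

/-- The alternating connectivity `κ_{r,ℓ}(G)`. -/
def altConn {V : Type*} (G : SimpleGraph V) (r ℓ : ℕ) : ℕ :=
  sSup {t | HasAltConn G r ℓ t}

open Finset

namespace SimpleGraph

variable {V : Type*} {G : SimpleGraph V}

lemma Walk.exists_eq_of_length_eq_two {u v : V} (p : G.Walk u v) (hp : p.length = 2) :
    ∃ w, G.Adj u w ∧ G.Adj w v ∧ p.edges = [s(u, w), s(w, v)] ∧
      p.support.tail.dropLast = [w] := by
  match p, hp with
  | .cons huw (.cons hwv .nil), _ => exact ⟨_, huw, hwv, rfl, rfl⟩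

variable [Fintype V] {β : Type*}

lemma sum_degree_sq_le {D : ℝ} (h : ∀ v, (G.degree v : ℝ) ≤ D) :
    ∑ v, (G.degree v : ℝ) ^ 2 ≤ Fintype.card V * D ^ 2 := by
  simpa using sum_le_card_nsmul univ _ _ fun v _ => pow_le_pow_left₀ (Nat.cast_nonneg _) (h v) 2

def altMidpoints (G : SimpleGraph V) (c : Sym2 V → β) (u v : V) : Finset V :=
  {w | G.Adj u w ∧ G.Adj w v ∧ c s(u, w) ≠ c s(w, v)}

lemma sum_card_altMidpoints (c : Sym2 V → β) :
    ∑ p : V × V, #(G.altMidpoints c p.1 p.2) =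
      ∑ w, #{p ∈ G.neighborFinset w ×ˢ G.neighborFinset w | c s(p.1, w) ≠ c s(p.2, w)} := by
  have hfiber (w : V) : {p ∈ G.neighborFinset w ×ˢ G.neighborFinset w | c s(p.1, w) ≠ c s(p.2, w)}
      = ({p : V × V | G.Adj p.1 w ∧ G.Adj w p.2 ∧ c s(p.1, w) ≠ c s(w, p.2)} : Finset _) := by
    ext; simp [adj_comm, Sym2.eq_swap, and_assoc]
  simp only [hfiber, altMidpoints, card_filter]
  exact sum_comm

end SimpleGraph

namespace Finset

variable {α β : Type*} [Fintype β]

lemma card_filter_eq_sum_sq (s : Finset α) (g : α → β) :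
    #{p ∈ s ×ˢ s | g p.1 = g p.2} = ∑ i, #{a ∈ s | g a = i} ^ 2 := by
  rw [card_eq_sum_card_fiberwise (f := fun p => g p.1) (t := univ) fun _ _ => mem_univ _]
  refine sum_congr rfl fun i _ => ?_
  rw [sq, ← card_product, filter_filter]
  congr 1
  ext ⟨a, a'⟩
  simp only [mem_filter, mem_product]
  constructor
  · rintro ⟨⟨ha, ha'⟩, he, rfl⟩
    exact ⟨⟨ha, rfl⟩, ha', he.symm⟩
  · rintro ⟨⟨ha, rfl⟩, ha', he⟩
    exact ⟨⟨ha, ha'⟩, he.symm, rfl⟩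

lemma card_filter_ne_le (s : Finset α) (g : α → β) :
    (#{p ∈ s ×ˢ s | g p.1 ≠ g p.2} : ℝ) ≤ (1 - 1 / Fintype.card β) * #s ^ 2 := by
  have hsplit :
      (#{p ∈ s ×ˢ s | g p.1 ≠ g p.2} : ℝ) + ∑ i, (#{a ∈ s | g a = i} : ℝ) ^ 2 = #s ^ 2 := by
    have : #{p ∈ s ×ˢ s | g p.1 ≠ g p.2} + ∑ i, #{a ∈ s | g a = i} ^ 2 = #s ^ 2 := by
      rw [← card_filter_eq_sum_sq, add_comm, card_filter_add_card_filter_not, card_product, sq]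
    exact_mod_cast this
  have hcs : (#s : ℝ) ^ 2 ≤ Fintype.card β * ∑ i, (#{a ∈ s | g a = i} : ℝ) ^ 2 := by
    have hsum : ∑ i, #{a ∈ s | g a = i} = #s :=
      (card_eq_sum_card_fiberwise fun _ _ => mem_univ _).symm
    have := sq_sum_le_card_mul_sum_sq (s := univ) (f := fun i => (#{a ∈ s | g a = i} : ℝ))
    rwa [← Nat.cast_sum, hsum, card_univ] at this
  have : (#s : ℝ) ^ 2 / Fintype.card β ≤ ∑ i, (#{a ∈ s | g a = i} : ℝ) ^ 2 :=
    div_le_of_le_mul₀ (by positivity) (by positivity) (by linarith)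
  rw [sub_mul, one_mul, one_div_mul_eq_div]
  linarith

end Finset

lemma exists_pos_one_add_pow_three_le {ε : ℝ} (hε : 0 < ε) :
    ∃ δ > 0, (1 + δ) ^ 3 ≤ 1 + ε := by
  have h0 : 0 < min (ε / 7) 1 := by positivity
  have h1 := min_le_left (ε / 7) 1
  have h2 := min_le_right (ε / 7) 1
  refine ⟨min (ε / 7) 1, h0, ?_⟩
  nlinarith [mul_nonneg h0.le (sub_nonneg.2 h2),
    mul_nonneg (mul_nonneg h0.le h0.le) (sub_nonneg.2 h2)]

lemma eventually_natCast_div_sub_one_le {δ : ℝ} (hδ : 0 < δ) :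
    ∀ᶠ n : ℕ in atTop, (n : ℝ) / (n - 1) ≤ 1 + δ := by
  simpa [← sub_eq_add_neg] using
    (tendsto_natCast_div_add_atTop (-1 : ℝ)).eventually (eventually_le_nhds (by linarith))

lemma one_sub_one_div_natCast_nonneg (r : ℕ) : 0 ≤ 1 - 1 / (r : ℝ) :=
  sub_nonneg.2 (by simpa using Nat.cast_inv_le_one r)

section AltConn

variable {V : Type*} {G : SimpleGraph V} {r t : ℕ}

lemma HasAltConn.exists_le_card_altMidpoints [Fintype V] (h : HasAltConn G r 2 t) :
    ∃ c : Sym2 V → Fin r, ∀ u v, u ≠ v → t ≤ #(G.altMidpoints c u v) := by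
  obtain ⟨c, hc⟩ := h
  refine ⟨c, fun u v huv => ?_⟩
  obtain ⟨f, -, hpath, hdisj⟩ := hc u v huv
  choose m hm using fun i => (f i).exists_eq_of_length_eq_two (hpath i).2.1
  refine (card_fin t).symm.trans_le
    (card_le_card_of_injOn m (fun i _ => ?_) fun i _ j _ hij => ?_)
  · obtain ⟨huw, hwv, hedges, -⟩ := hm i
    have halt := (hpath i).2.2
    rw [hedges] at halt
    simpa [SimpleGraph.altMidpoints] using ⟨huw, hwv, List.isChain_pair.1 halt⟩
  · by_contra hne
    refine hdisj i j hne (m i) ?_ ?_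
    · simp [(hm i).2.2.2]
    · simp [(hm j).2.2.2, hij]

lemma HasAltConn.mul_le_sum_degree_sq [Fintype V] (h : HasAltConn G r 2 t) :
    (t : ℝ) * (Fintype.card V * (Fintype.card V - 1)) ≤
      (1 - 1 / r) * ∑ v, (G.degree v : ℝ) ^ 2 := by
  obtain ⟨c, hc⟩ := h.exists_le_card_altMidpoints
  have hpairs : t * #(univ : Finset V).offDiag ≤ ∑ p : V × V, #(G.altMidpoints c p.1 p.2) :=
    calc t * #(univ : Finset V).offDiag = ∑ p ∈ univ.offDiag, t := by
          rw [sum_const, smul_eq_mul, mul_comm]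
      _ ≤ ∑ p ∈ univ.offDiag, #(G.altMidpoints c p.1 p.2) :=
          sum_le_sum fun p hp => hc _ _ (mem_offDiag.1 hp).2.2
      _ ≤ _ := sum_le_sum_of_subset (subset_univ _)
  have hoff : (#(univ : Finset V).offDiag : ℝ) = Fintype.card V * (Fintype.card V - 1) := by
    rw [offDiag_card, Nat.cast_sub (Nat.le_mul_self _), card_univ]; push_cast; ring
  calc (t : ℝ) * (Fintype.card V * (Fintype.card V - 1))
      = (t * #(univ : Finset V).offDiag : ℕ) := by push_cast [hoff]; rfl
    _ ≤ (∑ p : V × V, #(G.altMidpoints c p.1 p.2) : ℕ) := by exact_mod_cast hpairs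
    _ ≤ ∑ w, (1 - 1 / r) * (G.degree w : ℝ) ^ 2 := by
          rw [SimpleGraph.sum_card_altMidpoints, Nat.cast_sum]
          exact sum_le_sum fun w _ => by
            simpa using (G.neighborFinset w).card_filter_ne_le fun u => c s(u, w)
    _ = _ := by rw [mul_sum]

lemma altConn_le_of_forall_hasAltConn {ℓ : ℕ} {B : ℝ} (hB : 0 ≤ B)
    (h : ∀ t, HasAltConn G r ℓ t → (t : ℝ) ≤ B) : (altConn G r ℓ : ℝ) ≤ B :=
  calc (altConn G r ℓ : ℝ) ≤ ⌊B⌋₊ := by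
        exact_mod_cast csSup_le' fun t ht => Nat.le_floor (h t ht)
    _ ≤ B := Nat.floor_le hB

lemma altConn_two_le [Fintype V] (hV : 2 ≤ Fintype.card V) :
    (altConn G r 2 : ℝ) ≤
      (1 - 1 / r) * (∑ v, (G.degree v : ℝ) ^ 2) / (Fintype.card V * (Fintype.card V - 1)) := by
  have hV' : (2 : ℝ) ≤ Fintype.card V := by exact_mod_cast hV
  have hpos : (0 : ℝ) < Fintype.card V * (Fintype.card V - 1) := by nlinarith
  refine altConn_le_of_forall_hasAltConn ?_ fun t ht =>
    (le_div_iff₀ hpos).2 ht.mul_le_sum_degree_sq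
  exact div_nonneg (mul_nonneg (one_sub_one_div_natCast_nonneg r) (by positivity)) hpos.le

end AltConn

theorem altConn_length_two_upper_general (r : ℕ)
    (G : ∀ n : ℕ, SimpleGraph (Fin n)) (d : ℕ → ℝ)
    (hdeg : ∀ ε > (0 : ℝ), ∀ᶠ n : ℕ in atTop, ∀ v : Fin n,
      |((G n).degree v : ℝ) - d n| ≤ ε * d n) :
    ∀ ε > (0 : ℝ), ∀ᶠ n : ℕ in atTop,
      (altConn (G n) r 2 : ℝ) ≤ (1 - 1 / (r : ℝ) + ε) * (d n ^ 2 / n) := by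
  intro ε hε
  obtain ⟨δ, hδ, hδε⟩ := exists_pos_one_add_pow_three_le hε
  filter_upwards [hdeg δ hδ, eventually_natCast_div_sub_one_le hδ, eventually_ge_atTop 2]
    with n hdn hn hn2
  set a : ℝ := 1 - 1 / r
  have ha : 0 ≤ a := one_sub_one_div_natCast_nonneg r
  have ha1 : a ≤ 1 := by simp [a]
  have hn2' : (2 : ℝ) ≤ n := by exact_mod_cast hn2
  have hdle : ∀ v, ((G n).degree v : ℝ) ≤ (1 + δ) * d n := fun v => by
    linarith [(abs_le.1 (hdn v)).2]
  have hd : 0 ≤ d n := by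
    have := (abs_nonneg _).trans (hdn ⟨0, by omega⟩)
    exact nonneg_of_mul_nonneg_right this hδ
  have hsum : ∑ v, ((G n).degree v : ℝ) ^ 2 ≤ n * ((1 + δ) * d n) ^ 2 := by
    simpa using (G n).sum_degree_sq_le hdle
  calc (altConn (G n) r 2 : ℝ) ≤ a * (∑ v, ((G n).degree v : ℝ) ^ 2) / (n * (n - 1)) := by
        simpa only [Fintype.card_fin] using
          altConn_two_le (G := G n) (r := r) (by simpa using hn2)
    _ ≤ a * (n * ((1 + δ) * d n) ^ 2) / (n * (n - 1)) := by gcongr; nlinarith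
    _ = a * (1 + δ) ^ 2 * (n / (n - 1)) * (d n ^ 2 / n) := by field_simp
    _ ≤ a * (1 + δ) ^ 2 * (1 + δ) * (d n ^ 2 / n) := by gcongr
    _ ≤ (a + ε) * (d n ^ 2 / n) := by gcongr; nlinarith

/-- if every vertex of `G_n` has degree `(1+o(1))d_n`, then for fixed `r ≥ 2`,
for every `ε > 0` and all large `n`, `κ_{r,2}(G_n) ≤ (1 - 1/r + ε)d_n²/n`. -/
theorem altConn_length_two_upper (r : ℕ) (hr : 2 ≤ r)
    (G : ∀ n : ℕ, SimpleGraph (Fin n)) (d : ℕ → ℝ)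
    (hdeg : ∀ ε > (0 : ℝ), ∀ᶠ n : ℕ in atTop, ∀ v : Fin n,
      |((G n).degree v : ℝ) - d n| ≤ ε * d n) :
    ∀ ε > (0 : ℝ), ∀ᶠ n : ℕ in atTop,
      (altConn (G n) r 2 : ℝ) ≤ (1 - 1 / (r : ℝ) + ε) * (d n ^ 2 / n) :=
  altConn_length_two_upper_general r G d hdeg
end
end

section
/- Let r ≥ 2 be a fixed integer. Let (G_n) be a sequence of graphs where G_n has n vertices, every vertex of G_n has degree (1 + o(1))·d_n, every pair of distinct vertices of G_n has codegree (1 + o(1))·d_n²/n, and d_n²/(n·log n) → ∞. Then for every ε > 0 and all sufficiently large n, κ_{r,2}(G_n) ≥ (1 − 1/r − ε)·d_n²/n. -/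
open Filter

noncomputable section
open scoped Classical

/-!
Colour the edges uniformly at random. For distinct `u, v` with common neighbourhood `W`, the
`2 |W|` edges `uw, wv` (`w ∈ W`) are distinct, so the number of `w ∈ W` with `c(uw) = c(wv)` is
binomial with parameters `|W|` and `1/r`, and the exponential-moment (Chernoff) bound shows
that it exceeds `(1/r + ε)|W|` with probability at most `exp(-ε²|W|/4)`. As
`|W| ≈ d²/n ≫ log n`, a union bound over the `n²` pairs leaves a colouring in which every pair
`u, v` has at least `(1 - 1/r - ε)|W|` common neighbours `w` with `c(uw) ≠ c(wv)`, and the paths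
`u w v` through them are alternating and internally disjoint. Probabilities are replaced by
counts of colourings.
-/

open Finset SimpleGraph Real

theorem Fintype.sum_comp_of_injective {J K A M : Type*} [Fintype J] [Fintype K] [Fintype A]
    [DecidableEq J] [DecidableEq K] [AddCommMonoid M] {k : J → K} (hk : Function.Injective k)
    (g : (J → A) → M) :
    ∑ c : K → A, g (c ∘ k) =
      (Fintype.card A ^ (Fintype.card K - Fintype.card J)) • ∑ c : J → A, g c := by
  let e : (K → A) ≃ (J → A) × (↥(Set.range k)ᶜ → A) :=
    ((Equiv.Set.sumCompl (Set.range k)).symm.arrowCongr (Equiv.refl A)).trans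
      ((Equiv.sumArrowEquivProdArrow _ _ A).trans
        (((Equiv.ofInjective k hk).symm.arrowCongr (Equiv.refl A)).prodCongr (Equiv.refl _)))
  have he (c : K → A) : (e c).1 = c ∘ k := by
    funext j
    simp [e]
  have hcard : Fintype.card ↥(Set.range k)ᶜ = Fintype.card K - Fintype.card J := by
    rw [Fintype.card_compl_set, Set.card_range_of_injective hk]
  simp_rw [← he]
  rw [e.sum_comp (fun p => g p.1), Fintype.sum_prod_type_right, ← Finset.sum_nsmul]
  simp [hcard, Finset.smul_sum]

theorem sum_ite_apply_zero_eq_apply_one (r : ℕ) (y : ℝ) :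
    ∑ p : Fin 2 → Fin r, (if p 0 = p 1 then y else 1) = r * (r - 1 + y) := by
  have (a : Fin r) : ∑ b : Fin r, (if a = b then y else 1) = r - 1 + y := by
    rw [Finset.sum_ite, Finset.filter_eq, Finset.filter_ne]
    simp [Nat.cast_pred a.pos, add_comm]
  rw [← (piFinTwoEquiv fun _ => Fin r).symm.sum_comp, Fintype.sum_prod_type]
  simp [this, mul_add]

theorem mul_add_sq_div_four_le_mul_log_one_add {p ε : ℝ} (hp : 0 ≤ p) (hp2 : p ≤ 1 / 2)
    (hε : 0 < ε) (hε1 : ε ≤ 1) : p * ε + ε ^ 2 / 4 ≤ (p + ε) * log (1 + ε) := by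
  have hlog : ε / (1 + ε) ≤ log (1 + ε) := by
    have h := one_sub_inv_le_log_of_pos (x := 1 + ε) (by linarith)
    rwa [show 1 - (1 + ε)⁻¹ = ε / (1 + ε) by field_simp; ring] at h
  calc p * ε + ε ^ 2 / 4 ≤ (p + ε) * (ε / (1 + ε)) := by
        rw [mul_div_assoc', le_div_iff₀ (by linarith)]
        nlinarith [sq_nonneg ε, mul_pos hε hε]
    _ ≤ (p + ε) * log (1 + ε) := by gcongr

section Colorings

variable {V : Type*} {r : ℕ}

def monoCount (c : Sym2 V → Fin r) (u v : V) (W : Finset V) : ℕ :=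
  #{w ∈ W | c s(u, w) = c s(w, v)}

theorem injective_edges_of_paths_through {u v : V} {W : Finset V} (huv : u ≠ v) (hu : u ∉ W) :
    Function.Injective fun p : W × Fin 2 => ![s(u, p.1), s(p.1, v)] p.2 := by
  rintro ⟨⟨w, hw⟩, i⟩ ⟨⟨w', hw'⟩, i'⟩ h
  fin_cases i <;> fin_cases i' <;> simp at h ⊢ <;> grind

theorem sum_pow_monoCount [Fintype V] [DecidableEq V] (hr : 0 < r) {u v : V} {W : Finset V}
    (huv : u ≠ v) (hu : u ∉ W) (y : ℝ) :
    ∑ c : Sym2 V → Fin r, y ^ monoCount c u v W =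
      r ^ Fintype.card (Sym2 V) * (1 + (y - 1) / r) ^ #W := by
  set k := fun p : W × Fin 2 => ![s(u, p.1), s(p.1, v)] p.2
  have hk : Function.Injective k := injective_edges_of_paths_through huv hu
  let g : (W × Fin 2 → Fin r) → ℝ := fun c => ∏ w : W, if c (w, 0) = c (w, 1) then y else 1
  have hg (c : Sym2 V → Fin r) : y ^ monoCount c u v W = g (c ∘ k) :=
    calc y ^ monoCount c u v W = ∏ w ∈ W, if c s(u, w) = c s(w, v) then y else 1 := by
          simp [monoCount, Finset.prod_ite]
      _ = g (c ∘ k) := by rw [← Finset.prod_attach]; rfl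
  have hsum : ∑ c, g c = (r * (r - 1 + y)) ^ #W := by
    rw [← (Equiv.curry _ _ _).symm.sum_comp]
    change ∑ c : W → Fin 2 → Fin r, ∏ w, (if c w 0 = c w 1 then y else 1) = _
    convert (Fintype.prod_sum fun (_ : W) (p : Fin 2 → Fin r) => if p 0 = p 1 then y else 1).symm
    rw [sum_ite_apply_zero_eq_apply_one]
    simp
  have hK : 2 * #W ≤ Fintype.card (Sym2 V) := by
    simpa [mul_comm] using Fintype.card_le_of_injective k hk
  have hfactor : (r : ℝ) * (r - 1 + y) = r ^ 2 * (1 + (y - 1) / r) := by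
    field_simp
    ring
  simp_rw [hg]
  rw [Fintype.sum_comp_of_injective hk, hsum]
  simp only [Fintype.card_fin, Fintype.card_prod, Fintype.card_coe, nsmul_eq_mul, Nat.cast_pow]
  rw [hfactor, mul_pow, ← mul_assoc, ← pow_mul, ← pow_add, mul_comm #W, Nat.sub_add_cancel hK]

theorem card_filter_le_monoCount_le [Fintype V] [DecidableEq V] (hr : 2 ≤ r) {u v : V}
    {W : Finset V} (huv : u ≠ v) (hu : u ∉ W) {ε : ℝ} (hε : 0 < ε) (hε1 : ε ≤ 1) :
    (#{c : Sym2 V → Fin r | (1 / r + ε) * #W ≤ monoCount c u v W} : ℝ) ≤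
      r ^ Fintype.card (Sym2 V) * exp (-(ε ^ 2 / 4) * #W) := by
  set bad : Finset (Sym2 V → Fin r) := {c | (1 / r + ε) * #W ≤ monoCount c u v W}
  set κ : ℝ := (1 / r + ε) * #W
  have hr0 : (0 : ℝ) < r := by positivity
  have hmarkov : #bad * exp (κ * log (1 + ε)) ≤ r ^ Fintype.card (Sym2 V) * (1 + ε / r) ^ #W :=
    calc #bad * exp (κ * log (1 + ε)) = ∑ c ∈ bad, exp (κ * log (1 + ε)) := by
          rw [sum_const, nsmul_eq_mul]
      _ ≤ ∑ c ∈ bad, (1 + ε) ^ monoCount c u v W := by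
          gcongr with c hc
          have hε' : (0 : ℝ) < 1 + ε := by linarith
          rw [← exp_log hε', ← exp_nat_mul, exp_log hε']
          gcongr
          · exact log_nonneg (by linarith)
          · exact (mem_filter.1 hc).2
      _ ≤ ∑ c, (1 + ε) ^ monoCount c u v W :=
          sum_le_sum_of_subset_of_nonneg (subset_univ _) fun _ _ _ => by positivity
      _ = r ^ Fintype.card (Sym2 V) * (1 + ε / r) ^ #W := by
          rw [sum_pow_monoCount (by omega) huv hu, add_sub_cancel_left]
  have hpow : (1 + ε / r) ^ #W ≤ exp (ε / r * #W) :=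
    calc (1 + ε / r) ^ #W ≤ exp (ε / r) ^ #W := by
          gcongr
          linarith [add_one_le_exp (ε / r)]
      _ = exp (ε / r * #W) := by rw [← exp_nat_mul, mul_comm]
  have hexponent : ε / r * #W - κ * log (1 + ε) ≤ -(ε ^ 2 / 4) * #W := by
    have hr2 : 1 / (r : ℝ) ≤ 1 / 2 := by gcongr; exact_mod_cast hr
    have := mul_add_sq_div_four_le_mul_log_one_add (by positivity) hr2 hε hε1
    calc ε / r * #W - κ * log (1 + ε) = (1 / r * ε - (1 / r + ε) * log (1 + ε)) * #W := by
          ring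
      _ ≤ -(ε ^ 2 / 4) * #W := by gcongr; linarith
  calc (#bad : ℝ)
      ≤ r ^ Fintype.card (Sym2 V) * (1 + ε / r) ^ #W / exp (κ * log (1 + ε)) := by
        rw [le_div_iff₀ (exp_pos _)]
        exact hmarkov
    _ ≤ r ^ Fintype.card (Sym2 V) * exp (ε / r * #W) / exp (κ * log (1 + ε)) := by gcongr
    _ = r ^ Fintype.card (Sym2 V) * exp (ε / r * #W - κ * log (1 + ε)) := by
        rw [exp_sub, mul_div_assoc]
    _ ≤ r ^ Fintype.card (Sym2 V) * exp (-(ε ^ 2 / 4) * #W) := by gcongr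

theorem exists_coloring_forall_monoCount_lt [Fintype V] [DecidableEq V] (G : SimpleGraph V)
    (hr : 2 ≤ r) {ε m : ℝ} (hε : 0 < ε) (hε1 : ε ≤ 1)
    (hm : ∀ u v, u ≠ v → m ≤ #(G.neighborFinset u ∩ G.neighborFinset v))
    (hunion : (Fintype.card V : ℝ) ^ 2 * exp (-(ε ^ 2 / 4) * m) < 1) :
    ∃ c : Sym2 V → Fin r, ∀ u v, u ≠ v →
      (monoCount c u v (G.neighborFinset u ∩ G.neighborFinset v) : ℝ) <
        (1 / r + ε) * #(G.neighborFinset u ∩ G.neighborFinset v) := by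
  set W : V → V → Finset V := fun u v => G.neighborFinset u ∩ G.neighborFinset v
  set pairs := (univ : Finset V).offDiag
  set K := Fintype.card (Sym2 V)
  let bad : V × V → Finset (Sym2 V → Fin r) := fun p =>
    {c | (1 / r + ε) * #(W p.1 p.2) ≤ monoCount c p.1 p.2 (W p.1 p.2)}
  have hbad : ∀ p ∈ pairs, (#(bad p) : ℝ) ≤ r ^ K * exp (-(ε ^ 2 / 4) * m) := by
    rintro ⟨u, v⟩ huv
    have huv : u ≠ v := (mem_offDiag.1 huv).2.2
    refine (card_filter_le_monoCount_le hr huv (by simp [W]) hε hε1).trans ?_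
    gcongr _ * exp ?_
    exact mul_le_mul_of_nonpos_left (hm u v huv) (by nlinarith [sq_nonneg ε])
  have hpairs : (#pairs : ℝ) ≤ Fintype.card V ^ 2 := by
    exact_mod_cast (card_le_univ _).trans (by simp [sq])
  have hcard : (#(pairs.biUnion bad) : ℝ) < r ^ K :=
    calc (#(pairs.biUnion bad) : ℝ) ≤ ∑ p ∈ pairs, (#(bad p) : ℝ) := by
          exact_mod_cast card_biUnion_le
      _ ≤ #pairs * (r ^ K * exp (-(ε ^ 2 / 4) * m)) := by
          simpa using sum_le_card_nsmul _ _ _ hbad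
      _ ≤ Fintype.card V ^ 2 * (r ^ K * exp (-(ε ^ 2 / 4) * m)) := by gcongr
      _ < r ^ K := by
          have : (0 : ℝ) < r ^ K := pow_pos (by positivity) _
          nlinarith
  obtain ⟨c, -, hc⟩ := exists_mem_notMem_of_card_lt_card (s := pairs.biUnion bad)
    (t := univ) (by simpa using (by exact_mod_cast hcard : #(pairs.biUnion bad) < r ^ K))
  refine ⟨c, fun u v huv => not_le.1 fun hle => hc ?_⟩
  exact mem_biUnion.2 ⟨(u, v), by simp [pairs, huv], by simpa [bad] using hle⟩

theorem hasAltConn_two_of_le_card [Fintype V] [DecidableEq V] {G : SimpleGraph V} {t : ℕ}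
    (c : Sym2 V → Fin r)
    (h : ∀ u v, u ≠ v →
      t ≤ #{w ∈ G.neighborFinset u ∩ G.neighborFinset v | c s(u, w) ≠ c s(w, v)}) :
    HasAltConn G r 2 t := by
  refine ⟨c, fun u v huv => ?_⟩
  set S := {w ∈ G.neighborFinset u ∩ G.neighborFinset v | c s(u, w) ≠ c s(w, v)}
  obtain ⟨φ⟩ : Nonempty (Fin t ↪ S) :=
    Function.Embedding.nonempty_of_card_le (by simpa using h u v huv)
  have hφ (i : Fin t) : G.Adj u (φ i) ∧ G.Adj (φ i) v ∧ c s(u, φ i) ≠ c s(φ i, v) := by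
    have := (φ i).2
    simp only [S, mem_filter, mem_inter, mem_neighborFinset] at this
    exact ⟨this.1.1, this.1.2.symm, this.2⟩
  refine ⟨fun i => .cons (hφ i).1 (.cons (hφ i).2.1 .nil), fun i j hij => ?_,
    fun i => ⟨?_, rfl, ?_⟩, fun i j hij x hx hx' => ?_⟩
  · simpa [Subtype.ext_iff] using congrArg Walk.support hij
  · simp [Walk.cons_isPath_iff, huv, (hφ i).1.ne, (hφ i).2.1.ne]
  · exact List.isChain_pair.2 (hφ i).2.2
  · simp only [Walk.support_cons, Walk.support_nil, List.tail_cons, List.dropLast,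
      List.mem_singleton] at hx hx'
    exact hij (φ.injective (Subtype.ext (hx.symm.trans hx')))

theorem HasAltConn.le_card [Fintype V] [Nontrivial V] {G : SimpleGraph V} {ℓ t : ℕ}
    (hℓ : 2 ≤ ℓ) (h : HasAltConn G r ℓ t) : t ≤ Fintype.card V := by
  obtain ⟨c, hc⟩ := h
  obtain ⟨u, v, huv⟩ := exists_pair_ne V
  obtain ⟨f, -, hf, hdisj⟩ := hc u v huv
  have hne (i : Fin t) : (f i).support.tail.dropLast ≠ [] := by
    rw [← List.length_pos_iff]
    simp [(hf i).2.1]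
    omega
  let φ i := (f i).support.tail.dropLast.head (hne i)
  have hφ : Function.Injective φ := fun i j hij => by
    by_contra hij'
    exact hdisj i j hij' (φ i) (List.head_mem _) (hij ▸ List.head_mem _)
  simpa using Fintype.card_le_of_injective φ hφ

theorem le_altConn [Fintype V] [Nontrivial V] {G : SimpleGraph V} {ℓ t : ℕ} (hℓ : 2 ≤ ℓ)
    (h : HasAltConn G r ℓ t) : t ≤ altConn G r ℓ :=
  le_csSup ⟨Fintype.card V, fun _ ht => ht.le_card hℓ⟩ h

theorem le_altConn_two [Fintype V] [DecidableEq V] [Nontrivial V] (G : SimpleGraph V)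
    (hr : 2 ≤ r) {δ m : ℝ} (hδ : 0 < δ) (hδ1 : δ ≤ 1)
    (hm : ∀ u v, u ≠ v → m ≤ #(G.neighborFinset u ∩ G.neighborFinset v))
    (hlog : 8 * log (Fintype.card V) < δ ^ 2 * m) :
    (1 - 1 / r - δ) * m ≤ altConn G r 2 := by
  have hm0 : 0 < m := pos_of_mul_pos_right
    ((mul_nonneg (by norm_num) (log_natCast_nonneg _)).trans_lt hlog) (by positivity)
  rcases le_or_gt (1 - 1 / r - δ) 0 with hcoef | hcoef
  · exact (mul_nonpos_of_nonpos_of_nonneg hcoef hm0.le).trans (Nat.cast_nonneg _)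
  have hunion : (Fintype.card V : ℝ) ^ 2 * exp (-(δ ^ 2 / 4) * m) < 1 := by
    rw [← exp_log (by exact_mod_cast Fintype.card_pos : (0 : ℝ) < Fintype.card V),
      ← exp_nat_mul, ← exp_add]
    exact exp_lt_one_iff.2 (by push_cast; linarith)
  obtain ⟨c, hc⟩ := exists_coloring_forall_monoCount_lt G (r := r) hr hδ hδ1 hm hunion
  have halt (u v : V) (huv : u ≠ v) : ⌈(1 - 1 / r - δ) * m⌉₊ ≤
      #{w ∈ G.neighborFinset u ∩ G.neighborFinset v | c s(u, w) ≠ c s(w, v)} := by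
    set W := G.neighborFinset u ∩ G.neighborFinset v
    have hsplit : (monoCount c u v W : ℝ) + #{w ∈ W | c s(u, w) ≠ c s(w, v)} = #W := by
      exact_mod_cast card_filter_add_card_filter_not _
    rw [Nat.ceil_le]
    calc (1 - 1 / r - δ) * m ≤ (1 - 1 / r - δ) * #W := by gcongr; exact hm u v huv
      _ ≤ #{w ∈ W | c s(u, w) ≠ c s(w, v)} := by linarith [hc u v huv]
  exact (Nat.le_ceil _).trans
    (by exact_mod_cast le_altConn le_rfl (hasAltConn_two_of_le_card c halt))

end Colorings

theorem altConn_length_two_lower_general (r : ℕ) (hr : 2 ≤ r)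
    (G : ∀ n : ℕ, SimpleGraph (Fin n)) (d : ℕ → ℝ)
    (hcodeg : ∀ ε > (0 : ℝ), ∀ᶠ n : ℕ in atTop, ∀ u v : Fin n, u ≠ v →
      |((((G n).neighborFinset u) ∩ ((G n).neighborFinset v)).card : ℝ) - d n ^ 2 / n| ≤
        ε * (d n ^ 2 / n))
    (hgrow : Tendsto (fun n : ℕ => d n ^ 2 / ((n : ℝ) * Real.log n)) atTop atTop) :
    ∀ ε > (0 : ℝ), ∀ᶠ n : ℕ in atTop,
      (1 - 1 / (r : ℝ) - ε) * (d n ^ 2 / n) ≤ (altConn (G n) r 2 : ℝ) := by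
  intro ε hε
  obtain ⟨δ, hδ, hδε, hδ1⟩ : ∃ δ : ℝ, 0 < δ ∧ 2 * δ ≤ ε ∧ δ ≤ 1 / 2 :=
    ⟨min ε 1 / 2, by positivity, by linarith [min_le_left ε 1],
      by linarith [min_le_right ε 1]⟩
  filter_upwards [hcodeg δ hδ, hgrow.eventually_ge_atTop (17 / δ ^ 2), eventually_ge_atTop 2]
    with n hcod hgrow_n hn
  have : Nontrivial (Fin n) := Fin.nontrivial_iff_two_le.2 hn
  have hlog : 0 < log n := log_pos (by exact_mod_cast hn)
  set q := d n ^ 2 / n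
  have hq : 17 * log n ≤ δ ^ 2 * q := by
    rw [← div_div, div_le_div_iff₀ (by positivity) hlog] at hgrow_n
    linarith
  have hcodeg_n (u v : Fin n) (huv : u ≠ v) :
      (1 - δ) * q ≤ #((G n).neighborFinset u ∩ (G n).neighborFinset v) := by
    linarith [(abs_le.1 (hcod u v huv)).1]
  have hlog_n : 8 * log (Fintype.card (Fin n)) < δ ^ 2 * ((1 - δ) * q) := by
    rw [Fintype.card_fin]
    nlinarith
  have hq0 : 0 ≤ q := by positivity
  calc (1 - 1 / r - ε) * q ≤ (1 - 1 / r - δ) * ((1 - δ) * q) := by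
        nlinarith [mul_nonneg hq0 (sub_nonneg.2 hδε),
          mul_nonneg hq0 (by positivity : (0 : ℝ) ≤ δ * (1 / r + δ))]
    _ ≤ altConn (G n) r 2 := le_altConn_two (G n) hr hδ (by linarith) hcodeg_n hlog_n

/-- if every vertex of `G_n` has degree `(1+o(1))d_n`, every pair of distinct
vertices has codegree `(1+o(1))d_n²/n`, and `d_n²/(n log n) → ∞`, then for fixed `r ≥ 2`,
for every `ε > 0` and all large `n`, `κ_{r,2}(G_n) ≥ (1 - 1/r - ε)d_n²/n`. -/
theorem altConn_length_two_lower (r : ℕ) (hr : 2 ≤ r)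
    (G : ∀ n : ℕ, SimpleGraph (Fin n)) (d : ℕ → ℝ)
    (hdeg : ∀ ε > (0 : ℝ), ∀ᶠ n : ℕ in atTop, ∀ v : Fin n,
      |((G n).degree v : ℝ) - d n| ≤ ε * d n)
    (hcodeg : ∀ ε > (0 : ℝ), ∀ᶠ n : ℕ in atTop, ∀ u v : Fin n, u ≠ v →
      |((((G n).neighborFinset u) ∩ ((G n).neighborFinset v)).card : ℝ) - d n ^ 2 / n| ≤
        ε * (d n ^ 2 / n))
    (hgrow : Tendsto (fun n : ℕ => d n ^ 2 / ((n : ℝ) * Real.log n)) atTop atTop) :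
    ∀ ε > (0 : ℝ), ∀ᶠ n : ℕ in atTop,
      (1 - 1 / (r : ℝ) - ε) * (d n ^ 2 / n) ≤ (altConn (G n) r 2 : ℝ) :=
  altConn_length_two_lower_general r hr G d hcodeg hgrow
end
end

section
/- Let G be a d-regular graph on n vertices whose edges are each colored red or blue. Then the number of alternating paths of length 3 in G (paths on 4 distinct vertices, counted up to reversal, in which no two consecutive edges have the same color) is at most n·d³/8. -/
/-!
Count oriented alternating walks `a - b - c - e` by their middle dart `(b, c)`: if `bc` has
colour `γ`, the walk is determined by a neighbour `a` of `b` and a neighbour `e` of `c` whose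
edges have colour `!γ`, so the count is `x(b, c) * x(c, b)` with
`x(b, c) = #{a ~ b | col ab ≠ col bc}`.
By the rearrangement inequality the sum over darts of `x(d) x(d.symm)` is at most the sum of
`x(d)²`, and grouping by the first vertex `b`, with `r` and `s` its red and blue degrees, gives
`r s² + s r² = r s (r + s) ≤ (r + s)³ / 4`. Summing, there are at most `n d³ / 4` oriented
alternating walks; a path counted with `a < e` and its reversal are two distinct such walks.
-/

open Finset

namespace SimpleGraph

variable {V : Type*} (G : SimpleGraph V) (col : Sym2 V → Bool)

def IsAlternatingThreeWalk (t : V × V × V × V) : Prop :=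
  G.Adj t.1 t.2.1 ∧ G.Adj t.2.1 t.2.2.1 ∧ G.Adj t.2.2.1 t.2.2.2 ∧
    col s(t.1, t.2.1) ≠ col s(t.2.1, t.2.2.1) ∧
    col s(t.2.1, t.2.2.1) ≠ col s(t.2.2.1, t.2.2.2)

theorem IsAlternatingThreeWalk.reverse {a b c e : V}
    (h : G.IsAlternatingThreeWalk col (a, b, c, e)) :
    G.IsAlternatingThreeWalk col (e, c, b, a) := by
  dsimp only [IsAlternatingThreeWalk] at h ⊢
  obtain ⟨hab, hbc, hce, hcol₁, hcol₂⟩ := h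
  refine ⟨hce.symm, hbc.symm, hab.symm, ?_, ?_⟩
  · rwa [Sym2.eq_swap (a := e), Sym2.eq_swap (a := c) (b := b), ne_comm]
  · rwa [Sym2.eq_swap (a := c), Sym2.eq_swap (a := b) (b := a), ne_comm]

instance [DecidableRel G.Adj] : DecidablePred (G.IsAlternatingThreeWalk col) :=
  fun _ => inferInstanceAs (Decidable (_ ∧ _))

section Fintype

variable [Fintype V] [DecidableRel G.Adj]

def colorNeighborFinset (v : V) (β : Bool) : Finset V :=
  {w ∈ G.neighborFinset v | col s(v, w) = β}

@[simp]
theorem mem_colorNeighborFinset {v w : V} {β : Bool} :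
    w ∈ G.colorNeighborFinset col v β ↔ G.Adj v w ∧ col s(v, w) = β := by
  simp [colorNeighborFinset]

theorem card_colorNeighborFinset_true_add_false (v : V) :
    #(G.colorNeighborFinset col v true) + #(G.colorNeighborFinset col v false) = G.degree v := by
  rw [← card_neighborFinset_eq_degree,
    ← card_filter_add_card_filter_not (s := G.neighborFinset v) (fun w => col s(v, w) = true)]
  simp [colorNeighborFinset]

theorem sum_darts_eq_sum_sum_neighborFinset {M : Type*} [AddCommMonoid M] (f : V → V → M) :
    ∑ d : G.Dart, f d.fst d.snd = ∑ v, ∑ w ∈ G.neighborFinset v, f v w := by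
  classical
  rw [← sum_fiberwise univ (fun d : G.Dart => d.fst)]
  refine sum_congr rfl fun v _ => ?_
  rw [G.dart_fst_fiber v, sum_image fun _ _ _ _ h => G.dartOfNeighborSet_injective v h]
  exact sum_set_coe (f := f v) (G.neighborSet v)

theorem sum_neighborFinset_sq_card_colorNeighborFinset_not (v : V) :
    ∑ w ∈ G.neighborFinset v, #(G.colorNeighborFinset col v (!col s(v, w))) ^ 2 =
      #(G.colorNeighborFinset col v true) * #(G.colorNeighborFinset col v false) * G.degree v := by
  rw [← sum_fiberwise (G.neighborFinset v) (fun w => col s(v, w)), Fintype.sum_bool,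
    ← card_colorNeighborFinset_true_add_false]
  have key : ∀ β, ∑ w ∈ G.neighborFinset v with col s(v, w) = β,
      #(G.colorNeighborFinset col v (!col s(v, w))) ^ 2 =
        #(G.colorNeighborFinset col v β) * #(G.colorNeighborFinset col v (!β)) ^ 2 := by
    intro β
    rw [sum_congr rfl fun w hw => by rw [(mem_filter.1 hw).2], sum_const, smul_eq_mul]
    rfl
  rw [key, key]
  simp only [Bool.not_true, Bool.not_false]
  ring

theorem two_mul_card_alternatingThreeWalks_lt_le [LinearOrder V] :
    2 * #{t | G.IsAlternatingThreeWalk col t ∧ t.1 < t.2.2.2} ≤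
      #{t | G.IsAlternatingThreeWalk col t} := by
  set S : Finset (V × V × V × V) := {t | G.IsAlternatingThreeWalk col t ∧ t.1 < t.2.2.2}
  set S' : Finset (V × V × V × V) := {t | G.IsAlternatingThreeWalk col t ∧ t.2.2.2 < t.1}
  have hrev : #S = #S' := by
    refine card_nbij' (fun t => (t.2.2.2, t.2.2.1, t.2.1, t.1))
      (fun t => (t.2.2.2, t.2.2.1, t.2.1, t.1)) ?_ ?_ (fun _ _ => rfl) (fun _ _ => rfl) <;>
    · rintro ⟨a, b, c, e⟩ ht
      simp only [S, S', mem_coe, mem_filter, mem_univ, true_and] at ht ⊢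
      exact ⟨ht.1.reverse, ht.2⟩
  calc 2 * #S = #(S ∪ S') := by
        rw [card_union_of_disjoint, ← hrev, two_mul]
        exact disjoint_filter.2 fun t _ h h' => lt_asymm h.2 h'.2
    _ ≤ #{t | G.IsAlternatingThreeWalk col t} :=
        card_le_card <| union_subset (monotone_filter_right _ fun _ _ => And.left)
          (monotone_filter_right _ fun _ _ => And.left)

theorem card_alternatingThreeWalks_eq_sum_darts :
    #{t | G.IsAlternatingThreeWalk col t} = ∑ d : G.Dart,
      #(G.colorNeighborFinset col d.fst (!col d.edge)) *
        #(G.colorNeighborFinset col d.snd (!col d.edge)) := by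
  classical
  rw [card_eq_sum_card_fiberwise (f := fun t => (t.2.1, t.2.2.1))
    (t := univ.map ⟨Dart.toProd, Dart.toProd_injective⟩)
    fun t ht => mem_map.2 ⟨⟨_, (mem_filter.1 ht).2.2.1⟩, mem_univ _, rfl⟩, sum_map]
  refine sum_congr rfl fun ⟨⟨b, c⟩, hbc⟩ _ => ?_
  rw [← card_product]
  refine card_nbij' (fun t => (t.1, t.2.2.2)) (fun p => (p.1, b, c, p.2)) ?_ ?_ ?_ ?_
  · rintro ⟨a, b', c', e⟩ ht
    simp only [mem_coe, mem_filter, mem_univ, true_and, mem_product] at ht ⊢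
    simp only [mem_colorNeighborFinset, IsAlternatingThreeWalk, Function.Embedding.coeFn_mk,
      Prod.ext_iff, Dart.edge, Bool.eq_not] at ht ⊢
    obtain ⟨⟨hab, -, hce, hcol₁, hcol₂⟩, rfl, rfl⟩ := ht
    exact ⟨⟨hab.symm, by rwa [Sym2.eq_swap]⟩, hce, hcol₂.symm⟩
  · rintro ⟨a, e⟩ h
    simp only [mem_coe, mem_filter, mem_univ, true_and, mem_product] at h ⊢
    simp only [mem_colorNeighborFinset, IsAlternatingThreeWalk, Function.Embedding.coeFn_mk,
      Dart.edge, Bool.eq_not, and_true] at h ⊢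
    obtain ⟨⟨hba, hcol₁⟩, hce, hcol₂⟩ := h
    exact ⟨hba.symm, hbc, hce, by rwa [Sym2.eq_swap], hcol₂.symm⟩
  · rintro ⟨a, b', c', e⟩ ht
    simp only [mem_coe, mem_filter, Function.Embedding.coeFn_mk, Prod.ext_iff] at ht
    obtain ⟨-, rfl, rfl⟩ := ht
    rfl
  · intro _ _; rfl

theorem four_mul_card_alternatingThreeWalks_le_sum_degree_pow_three :
    4 * #{t | G.IsAlternatingThreeWalk col t} ≤ ∑ v, G.degree v ^ 3 := by
  set x : G.Dart → ℕ := fun d => #(G.colorNeighborFinset col d.fst (!col d.edge))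
  have hx_symm (d : G.Dart) : x d.symm = #(G.colorNeighborFinset col d.snd (!col d.edge)) := by
    simp only [x, Dart.edge_symm]
    rfl
  have hx_sq : ∑ d, x d * x d = ∑ v,
      #(G.colorNeighborFinset col v true) * #(G.colorNeighborFinset col v false) * G.degree v := by
    simp only [x, ← sq, Dart.edge]
    exact (G.sum_darts_eq_sum_sum_neighborFinset
      fun v w => #(G.colorNeighborFinset col v (!col s(v, w))) ^ 2).trans
      (sum_congr rfl fun v _ => G.sum_neighborFinset_sq_card_colorNeighborFinset_not col v)
  calc 4 * #{t | G.IsAlternatingThreeWalk col t}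
      = 4 * ∑ d, x d * x (Dart.symm_involutive.toPerm _ d) := by
        rw [card_alternatingThreeWalks_eq_sum_darts]
        simp only [Function.Involutive.coe_toPerm, hx_symm]
        rfl
    _ ≤ 4 * ∑ d, x d * x d :=
        Nat.mul_le_mul_left 4 (monovary_self x).sum_mul_comp_perm_le_sum_mul
    _ = ∑ v, 4 * #(G.colorNeighborFinset col v true) * #(G.colorNeighborFinset col v false) *
          G.degree v := by
        simp only [hx_sq, mul_sum, mul_assoc]
    _ ≤ ∑ v, G.degree v ^ 3 := by
      refine sum_le_sum fun v _ => ?_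
      rw [pow_succ, ← card_colorNeighborFinset_true_add_false]
      gcongr
      exact four_mul_le_sq_add _ _

end Fintype

end SimpleGraph

open scoped Classical in
/-- a `d`-regular graph on `n` vertices with a red/blue edge-coloring has at
most `n d³/8` alternating paths of length 3.  A path of length 3 is a sequence of 4 distinct
vertices with consecutive vertices adjacent, counted up to reversal (here each path is
counted once via its orientation with first vertex smaller than last), and it is alternating
when no two consecutive edges get the same color. -/
theorem count_alternating_paths_length_three (n d : ℕ)
    (G : SimpleGraph (Fin n)) (hreg : G.IsRegularOfDegree d)
    (col : Sym2 (Fin n) → Bool) :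
    (((Finset.univ : Finset (Fin n × Fin n × Fin n × Fin n)).filter
        (fun t =>
          G.Adj t.1 t.2.1 ∧ G.Adj t.2.1 t.2.2.1 ∧ G.Adj t.2.2.1 t.2.2.2 ∧
          t.1 ≠ t.2.2.1 ∧ t.1 ≠ t.2.2.2 ∧ t.2.1 ≠ t.2.2.2 ∧
          col s(t.1, t.2.1) ≠ col s(t.2.1, t.2.2.1) ∧
          col s(t.2.1, t.2.2.1) ≠ col s(t.2.2.1, t.2.2.2) ∧
          t.1 < t.2.2.2)).card : ℝ) ≤ (n : ℝ) * (d : ℝ) ^ 3 / 8 := by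
  have hwalks := G.two_mul_card_alternatingThreeWalks_lt_le col
  have hdeg := G.four_mul_card_alternatingThreeWalks_le_sum_degree_pow_three col
  simp only [hreg.degree_eq, sum_const, card_univ, Fintype.card_fin, smul_eq_mul] at hdeg
  calc _ ≤ (#{t | G.IsAlternatingThreeWalk col t ∧ t.1 < t.2.2.2} : ℝ) := by
        refine Nat.cast_le.2 <| card_le_card <| monotone_filter_right _ fun _ _ h => ?_
        obtain ⟨hab, hbc, hce, -, -, -, hcol₁, hcol₂, hlt⟩ := h
        exact ⟨⟨hab, hbc, hce, hcol₁, hcol₂⟩, hlt⟩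
    _ ≤ n * d ^ 3 / 8 := by
        rw [le_div_iff₀ (by norm_num)]
        exact_mod_cast (by omega : _ * 8 ≤ n * d ^ 3)
end

section
/- Let G be a d-regular graph on vertex set [n] whose edge set E is partitioned into red edges R and blue edges B. For each vertex i, let r_i and b_i denote the number of red and blue edges incident to i (so r_i + b_i = d). Then Σ_{{i,j} ∈ B} r_i·r_j + Σ_{{k,ℓ} ∈ R} b_k·b_ℓ ≤ Σ_{i ∈ [n]} ( r_i²·b_i/2 + b_i²·r_i/2 ). -/
open Filter

noncomputable section
open scoped Classical

private lemma cherry_helper (n : ℕ) (G : SimpleGraph (Fin n)) (col : Sym2 (Fin n) → Bool)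
    (c : Bool) (x : Fin n → ℕ) :
    (∑ i : Fin n, ∑ j : Fin n,
        if G.Adj i j ∧ col s(i, j) = c then (x i : ℝ) * x j else 0) ≤
    ∑ i : Fin n, (x i : ℝ) ^ 2 *
      (((G.neighborFinset i).filter (fun j => col s(i, j) = c)).card : ℝ) := by
  have hswap : (∑ i : Fin n, ∑ j : Fin n,
      if G.Adj i j ∧ col s(i, j) = c then (x j : ℝ) ^ 2 else 0)
      = ∑ i : Fin n, ∑ j : Fin n,
      if G.Adj i j ∧ col s(i, j) = c then (x i : ℝ) ^ 2 else 0 := by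
    rw [Finset.sum_comm]
    refine Finset.sum_congr rfl fun i _ => Finset.sum_congr rfl fun j _ => ?_
    have : s(j, i) = s(i, j) := Sym2.eq_swap
    simp [G.adj_comm, this]
  have hcount : ∀ i : Fin n, (∑ j : Fin n,
      if G.Adj i j ∧ col s(i, j) = c then (x i : ℝ) ^ 2 else 0)
      = (x i : ℝ) ^ 2 *
        (((G.neighborFinset i).filter (fun j => col s(i, j) = c)).card : ℝ) := by
    intro i
    rw [← Finset.sum_filter]
    have : (Finset.univ.filter (fun j => G.Adj i j ∧ col s(i, j) = c))
        = (G.neighborFinset i).filter (fun j => col s(i, j) = c) := by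
      ext j; simp [SimpleGraph.mem_neighborFinset, and_comm]
    rw [this, Finset.sum_const, nsmul_eq_mul, mul_comm]
  calc (∑ i : Fin n, ∑ j : Fin n,
        if G.Adj i j ∧ col s(i, j) = c then (x i : ℝ) * x j else 0)
      ≤ ∑ i : Fin n, ∑ j : Fin n,
        if G.Adj i j ∧ col s(i, j) = c
          then ((x i : ℝ) ^ 2 + (x j : ℝ) ^ 2) / 2 else 0 := by
        refine Finset.sum_le_sum fun i _ => Finset.sum_le_sum fun j _ => ?_
        split
        · nlinarith [sq_nonneg ((x i : ℝ) - x j)]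
        · exact le_refl 0
    _ = ∑ i : Fin n, ∑ j : Fin n,
        if G.Adj i j ∧ col s(i, j) = c then (x i : ℝ) ^ 2 else 0 := by
        have split : ∀ i j : Fin n, (if G.Adj i j ∧ col s(i, j) = c
            then ((x i : ℝ) ^ 2 + (x j : ℝ) ^ 2) / 2 else 0)
            = (if G.Adj i j ∧ col s(i, j) = c then (x i : ℝ) ^ 2 else 0) / 2
              + (if G.Adj i j ∧ col s(i, j) = c then (x j : ℝ) ^ 2 else 0) / 2 := by
          intro i j; split <;> ring
        simp only [split, Finset.sum_add_distrib, ← Finset.sum_div]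
        rw [hswap]; ring
    _ = _ := Finset.sum_congr rfl fun i _ => hcount i

/-- for a `d`-regular graph `G` on `[n]` whose edges are partitioned into red
(`col e = true`) and blue (`col e = false`) edges, with `r i` and `b i` the red and blue
degrees of vertex `i`,
`Σ_{{i,j} ∈ B} r_i r_j + Σ_{{k,ℓ} ∈ R} b_k b_ℓ ≤ Σ_i (r_i² b_i/2 + b_i² r_i/2)`.
(The sums over unordered edges are written as halved sums over ordered adjacent pairs.) -/
theorem alternating_cherry_sum_bound (n d : ℕ) (G : SimpleGraph (Fin n))
    (hreg : G.IsRegularOfDegree d) (col : Sym2 (Fin n) → Bool)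
    (r b : Fin n → ℕ)
    (hr : ∀ i, r i = ((G.neighborFinset i).filter (fun j => col s(i, j) = true)).card)
    (hb : ∀ i, b i = ((G.neighborFinset i).filter (fun j => col s(i, j) = false)).card) :
    (∑ i : Fin n, ∑ j : Fin n,
        if G.Adj i j ∧ col s(i, j) = false then (r i : ℝ) * r j else 0) / 2 +
      (∑ i : Fin n, ∑ j : Fin n,
        if G.Adj i j ∧ col s(i, j) = true then (b i : ℝ) * b j else 0) / 2 ≤
    ∑ i : Fin n, ((r i : ℝ) ^ 2 * (b i : ℝ) / 2 + (b i : ℝ) ^ 2 * (r i : ℝ) / 2) := by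
  have h1 := cherry_helper n G col false r
  have h2 := cherry_helper n G col true b
  have e1 : ∀ i, (((G.neighborFinset i).filter (fun j => col s(i, j) = false)).card : ℝ) = b i := by
    intro i; rw [hb i]
  have e2 : ∀ i, (((G.neighborFinset i).filter (fun j => col s(i, j) = true)).card : ℝ) = r i := by
    intro i; rw [hr i]
  simp only [e1] at h1
  simp only [e2] at h2
  rw [Finset.sum_congr rfl (fun i _ => by ring :
    ∀ i ∈ Finset.univ, ((r i : ℝ) ^ 2 * (b i : ℝ) / 2 + (b i : ℝ) ^ 2 * (r i : ℝ) / 2)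
      = (r i : ℝ) ^ 2 * b i / 2 + (b i : ℝ) ^ 2 * r i / 2)]
  calc _ ≤ (∑ i : Fin n, (r i : ℝ) ^ 2 * b i) / 2 + (∑ i : Fin n, (b i : ℝ) ^ 2 * r i) / 2 := by
        gcongr
    _ = _ := by rw [Finset.sum_div, Finset.sum_div, ← Finset.sum_add_distrib]
end
end
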